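/- arXiv:1609.01213 — 7 statements merged into one kernel-verified Lean document; each statement's English description precedes it below -/
import Mathlib

section
/- Let F be a field and let ω ∈ F be a primitive (M−1)-th root of unity where M ≥ 2 is an integer. Let k_1, …, k_N be natural numbers with k_1 + ⋯ + k_N = M. Then in the polynomial ring F[x_1,…,x_N] one has ∑_{j=1}^{M−1} ∏_{i=1}^{N} (ω^j + x_i)^{k_i} = (M−1)·∏_{i=1}^{N} x_i^{k_i} + (M−1)·∑_{i=1}^{N} k_i x_i + [M = 2], where [M = 2] equals 1 if M = 2 and 0 otherwise. -/
open MvPolynomial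

lemma geo_sum {F : Type*} [Field F] {m : ℕ} {ω : F}
    (hω : IsPrimitiveRoot ω m) (s : ℕ) :
    ∑ j ∈ Finset.Icc 1 m, ω ^ (j * s) = if m ∣ s then (m : F) else 0 := by
  by_cases h : m ∣ s
  · rw [if_pos h]
    rw [Finset.sum_congr rfl (fun j _ => by
      rw [mul_comm, pow_mul, (hω.pow_eq_one_iff_dvd s).mpr h, one_pow])]
    simp [Nat.card_Icc]
  · rw [if_neg h]
    have hω1 : ω ^ s ≠ 1 := fun h1 => h ((hω.pow_eq_one_iff_dvd s).mp h1)
    have key : ∑ j ∈ Finset.Icc 1 m, ω ^ (j * s)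
        = ω ^ s * ∑ j ∈ Finset.range m, (ω ^ s) ^ j := by
      rw [Finset.mul_sum]
      rw [show Finset.Icc 1 m = Finset.Ico 1 (m + 1) by rw [Finset.Ico_add_one_right_eq_Icc]]
      rw [Finset.sum_Ico_eq_sum_range]
      apply Finset.sum_congr (by rw [Nat.add_sub_cancel])
      intro j _
      rw [← pow_mul, ← pow_add]
      congr 1
      ring
    rw [key, geom_sum_eq hω1, ← pow_mul, mul_comm s m, pow_mul, hω.pow_eq_one, one_pow]
    simp

theorem rootUnity_identity (F : Type*) [Field F] (M N : ℕ) (hM : 2 ≤ M)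
    (ω : F) (hω : IsPrimitiveRoot ω (M - 1))
    (k : Fin N → ℕ) (hk : ∑ i, k i = M) :
    ∑ j ∈ Finset.Icc 1 (M - 1), ∏ i, (C (ω ^ j) + X i) ^ k i
      = ((M - 1 : ℕ) : MvPolynomial (Fin N) F) * ∏ i, (X i) ^ k i
        + ((M - 1 : ℕ) : MvPolynomial (Fin N) F) * ∑ i, (k i : MvPolynomial (Fin N) F) * X i
        + (if M = 2 then 1 else 0) := by
  classical
  set m := M - 1 with hmdef
  have hm : 1 ≤ m := by omega
  have hMm : M = m + 1 := by omega
  set S := Fintype.piFinset (fun i : Fin N => Finset.range (k i + 1)) with hS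
  -- ∀ t ∈ S, t i ≤ k i
  have hmem : ∀ t ∈ S, ∀ i, t i ≤ k i := by
    intro t ht i
    have := Fintype.mem_piFinset.mp ht i
    simpa [Nat.lt_succ_iff] using this
  -- step 1: binomial expansion
  have expand : ∀ j : ℕ, ∏ i, (C (ω ^ j) + X i) ^ k i
      = ∑ t ∈ S,
          C (ω ^ (j * ∑ i, (k i - t i)) * ((∏ i, (k i).choose (t i) : ℕ) : F))
            * ∏ i, X i ^ t i := by
    intro j
    have h1 : ∀ i : Fin N, (C (ω ^ j) + X i) ^ k i
        = ∑ t ∈ Finset.range (k i + 1),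
            X i ^ t * C (ω ^ j) ^ (k i - t) * ((k i).choose t : MvPolynomial (Fin N) F) := by
      intro i
      rw [add_comm, add_pow]
    rw [Finset.prod_congr rfl (fun i _ => h1 i), Finset.prod_univ_sum]
    refine Finset.sum_congr rfl (fun t _ => ?_)
    rw [Finset.prod_mul_distrib, Finset.prod_mul_distrib,
      Finset.prod_pow_eq_pow_sum, ← C_pow, ← pow_mul,
      ← Nat.cast_prod, ← C_eq_coe_nat, mul_assoc, ← C_mul]
    ring
  rw [Finset.sum_congr rfl (fun j _ => expand j), Finset.sum_comm]
  -- step 2: evaluate the inner geometric sum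
  set g : (Fin N → ℕ) → MvPolynomial (Fin N) F := fun t =>
    C ((if m ∣ ∑ i, (k i - t i) then (m : F) else 0)
        * ((∏ i, (k i).choose (t i) : ℕ) : F)) * ∏ i, X i ^ t i with hg
  have step2 : ∀ t ∈ S,
      (∑ j ∈ Finset.Icc 1 m,
        C (ω ^ (j * ∑ i, (k i - t i)) * ((∏ i, (k i).choose (t i) : ℕ) : F))
          * ∏ i, X i ^ t i) = g t := by
    intro t _
    rw [← Finset.sum_mul, ← map_sum, ← Finset.sum_mul, geo_sum hω]
  rw [Finset.sum_congr rfl step2]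
  -- step 3: restrict to the support
  have key : ∑ t ∈ S, g t
      = ∑ t ∈ S.filter (fun t => (∑ i, t i = M ∨ ∑ i, t i = 1) ∨ (M = 2 ∧ ∑ i, t i = 0)), g t := by
    refine (Finset.sum_filter_of_ne ?_).symm
    intro t htS hne
    have hdvd : m ∣ ∑ i, (k i - t i) := by
      by_contra hc
      apply hne
      rw [hg]
      simp [hc]
    have hsub : ∑ i, (k i - t i) = M - ∑ i, t i := by
      rw [Finset.sum_tsub_distrib Finset.univ (fun i _ => hmem t htS i), hk]
    have hle : ∑ i, t i ≤ M := by
      rw [← hk]; exact Finset.sum_le_sum (fun i _ => hmem t htS i)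
    rw [hsub] at hdvd
    obtain ⟨c, hc⟩ := hdvd
    have h1 : m * c ≤ M := hc ▸ Nat.sub_le _ _
    have hc2 : c ≤ 2 := by nlinarith
    interval_cases c <;> omega
  rw [key, Finset.filter_or, Finset.filter_or, Finset.sum_union, Finset.sum_union]
  · -- compute the three sums
    have e1 : S.filter (fun t => ∑ i, t i = M) = {k} := by
      ext t
      simp only [Finset.mem_filter, Finset.mem_singleton]
      constructor
      · rintro ⟨htS, hsum⟩
        funext i
        exact (Finset.sum_eq_sum_iff_of_le (fun i _ => hmem t htS i)).mp
          (by rw [hsum, hk]) i (Finset.mem_univ i)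
      · rintro rfl
        exact ⟨Fintype.mem_piFinset.mpr (fun i => Finset.self_mem_range_succ _), hk⟩
    have e2 : S.filter (fun t => ∑ i, t i = 1)
        = (Finset.univ.filter (fun i => 1 ≤ k i)).image (fun i => Pi.single i 1) := by
      ext t
      simp only [Finset.mem_filter, Finset.mem_image, Finset.mem_univ, true_and]
      constructor
      · rintro ⟨htS, hsum⟩
        obtain ⟨i, -, hi⟩ := Finset.exists_ne_zero_of_sum_ne_zero
          (by rw [hsum]; norm_num : ∑ i, t i ≠ 0)
        have h2 : t i + ∑ i' ∈ Finset.univ.erase i, t i' = 1 := by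
          rw [Finset.add_sum_erase _ t (Finset.mem_univ i), hsum]
        have hti : t i = 1 := by omega
        have hrest : ∑ i' ∈ Finset.univ.erase i, t i' = 0 := by omega
        refine ⟨i, by have := hmem t htS i; omega, ?_⟩
        funext i'
        by_cases h : i' = i
        · subst h; simp [hti]
        · rw [Pi.single_eq_of_ne h]
          exact (Finset.sum_eq_zero_iff.mp hrest i'
            (Finset.mem_erase.mpr ⟨h, Finset.mem_univ _⟩)).symm
      · rintro ⟨i, hki, rfl⟩
        constructor
        · refine Fintype.mem_piFinset.mpr (fun i' => Finset.mem_range.mpr ?_)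
          by_cases h : i' = i
          · subst h; simp [hki]; omega
          · rw [Pi.single_eq_of_ne h 1]; omega
        · simp [Finset.sum_pi_single']
    have e3 : ∑ t ∈ S.filter (fun t => M = 2 ∧ ∑ i, t i = 0), g t
        = (if M = 2 then 1 else 0 : MvPolynomial (Fin N) F) := by
      by_cases hM2 : M = 2
      · rw [if_pos hM2]
        have hset : S.filter (fun t => M = 2 ∧ ∑ i, t i = 0) = {fun _ => 0} := by
          ext t
          simp only [Finset.mem_filter, Finset.mem_singleton]
          constructor
          · rintro ⟨htS, -, hsum⟩
            funext i
            exact Finset.sum_eq_zero_iff.mp hsum i (Finset.mem_univ i)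
          · rintro rfl
            exact ⟨Fintype.mem_piFinset.mpr (fun i => by simp), hM2, by simp⟩
        rw [hset, Finset.sum_singleton, hg]
        have hm1 : m = 1 := by omega
        simp [hm1]
      · rw [if_neg hM2, Finset.filter_false_of_mem, Finset.sum_empty]
        intro t _
        simp [hM2]
    rw [e1, e2, e3, Finset.sum_singleton]
    have v1 : g k = ((m : ℕ) : MvPolynomial (Fin N) F) * ∏ i, (X i) ^ k i := by
      rw [hg]
      simp [Nat.choose_self, C_eq_coe_nat]
    have v2 : ∑ t ∈ (Finset.univ.filter (fun i => 1 ≤ k i)).image (fun i => Pi.single i 1), g t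
        = ((m : ℕ) : MvPolynomial (Fin N) F) * ∑ i, (k i : MvPolynomial (Fin N) F) * X i := by
      have hinj : ∀ i ∈ Finset.univ.filter (fun i => 1 ≤ k i),
          ∀ i' ∈ Finset.univ.filter (fun i => 1 ≤ k i),
          (Pi.single i 1 : Fin N → ℕ) = Pi.single i' 1 → i = i' := by
        intro i _ i' _ h
        by_contra hne
        have := congrFun h i
        rw [Pi.single_eq_same, Pi.single_eq_of_ne hne] at this
        exact one_ne_zero this
      rw [Finset.sum_image hinj]
      have hval : ∀ i ∈ Finset.univ.filter (fun i => 1 ≤ k i),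
          g (Pi.single i 1)
            = ((m : ℕ) : MvPolynomial (Fin N) F) * ((k i : MvPolynomial (Fin N) F) * X i) := by
        intro i hi
        have hki : 1 ≤ k i := (Finset.mem_filter.mp hi).2
        have hle : ∀ i', (Pi.single i 1 : Fin N → ℕ) i' ≤ k i' := by
          intro i'
          by_cases h : i' = i
          · subst h; simpa using hki
          · rw [Pi.single_eq_of_ne h]; omega
        have hs : ∑ i', (k i' - (Pi.single i 1 : Fin N → ℕ) i') = m := by
          rw [Finset.sum_tsub_distrib Finset.univ (fun i' _ => hle i'), hk,
            Finset.sum_pi_single']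
          simp [hmdef]
        have hch : ∏ i', (k i').choose ((Pi.single i 1 : Fin N → ℕ) i') = k i := by
          rw [Finset.prod_eq_single i]
          · rw [Pi.single_eq_same, Nat.choose_one_right]
          · intro i' _ h
            rw [Pi.single_eq_of_ne h, Nat.choose_zero_right]
          · exact fun h => absurd (Finset.mem_univ i) h
        have hX : ∏ i', (X i' : MvPolynomial (Fin N) F) ^ (Pi.single i 1 : Fin N → ℕ) i' = X i := by
          rw [Finset.prod_eq_single i]
          · rw [Pi.single_eq_same, pow_one]
          · intro i' _ h
            rw [Pi.single_eq_of_ne h, pow_zero]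
          · exact fun h => absurd (Finset.mem_univ i) h
        rw [hg]
        simp only [hs, hch, hX, dvd_refl, if_pos]
        rw [C_mul, C_eq_coe_nat, C_eq_coe_nat]
        ring
      rw [Finset.sum_congr rfl hval, ← Finset.mul_sum]
      congr 1
      refine Finset.sum_subset (Finset.filter_subset _ _) ?_
      intro i _ hni
      simp only [Finset.mem_filter, Finset.mem_univ, true_and, not_le, Nat.lt_one_iff] at hni
      simp [hni]
    rw [v1, v2]
  · rw [Finset.disjoint_left]
    intro t ht1 ht2
    have h1 := (Finset.mem_filter.mp ht1).2
    have h2 := (Finset.mem_filter.mp ht2).2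
    omega
  · rw [Finset.disjoint_left]
    intro t ht1 ht2
    have h2 := (Finset.mem_filter.mp ht2).2
    rcases Finset.mem_union.mp ht1 with h | h <;>
      have h1 := (Finset.mem_filter.mp h).2 <;> omega
end

section
/- Let q and k be relatively prime natural numbers with base-q expansion k = k_1 + k_2 q^{a_2} + ⋯ + k_N q^{a_N} (with 0 ≤ k_i < q, a_1 = 0, and the a_i strictly increasing). Then there exist natural numbers k' and u with u > 1, k ∣ k', and the base-q expansion of k' is k' = k_1 + k_2 q^{a_2'} + ⋯ + k_N q^{a_N'} where a_i' ≡ 1 (mod u) for all i ∈ {2,…,N}. -/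
private lemma pow_mod_congr {q k d x y : ℕ} (hd : q ^ d ≡ 1 [MOD k]) (hxy : x ≡ y [MOD d]) :
    q ^ x ≡ q ^ y [MOD k] := by
  wlog h : x ≤ y generalizing x y
  · exact (this hxy.symm (le_of_not_ge h)).symm
  obtain ⟨t, ht⟩ := (Nat.modEq_iff_dvd' h).mp hxy
  have hy : y = x + d * t := by omega
  subst hy
  have : q ^ (x + d * t) ≡ q ^ x [MOD k] := by
    calc q ^ (x + d * t) = q ^ x * (q ^ d) ^ t := by ring
      _ ≡ q ^ x * 1 ^ t [MOD k] := Nat.ModEq.mul_left _ (hd.pow t)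
      _ = q ^ x := by ring
  exact this.symm

private lemma modEq_sum {ι : Type*} (s : Finset ι) (f g : ι → ℕ) (n : ℕ)
    (h : ∀ i ∈ s, f i ≡ g i [MOD n]) : (∑ i ∈ s, f i) ≡ (∑ i ∈ s, g i) [MOD n] := by
  classical
  induction s using Finset.induction with
  | empty => rfl
  | @insert a s hx ih =>
    rw [Finset.sum_insert hx, Finset.sum_insert hx]
    exact (h a (Finset.mem_insert_self a s)).add
      (ih fun i hi => h i (Finset.mem_insert_of_mem hi))

theorem pump_exponents_mod_u (q k N : ℕ) [NeZero N] (hq : 2 ≤ q)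
    (hcop : Nat.Coprime q k) (hk : 1 ≤ k)
    (kd : Fin N → ℕ) (a : Fin N → ℕ)
    (hdig : ∀ i, kd i < q) (hpos : ∀ i, 0 < kd i)
    (ha : StrictMono a) (ha0 : a 0 = 0)
    (hexp : k = ∑ i, kd i * q ^ a i) :
    ∃ k' u : ℕ, 1 < u ∧ k ∣ k' ∧
      ∃ a' : Fin N → ℕ, StrictMono a' ∧ a' 0 = 0 ∧
        k' = ∑ i, kd i * q ^ a' i ∧
        ∀ i : Fin N, i ≠ 0 → a' i ≡ 1 [MOD u] := by
  set d := Nat.totient k with hd_def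
  have hdpos : 0 < d := Nat.totient_pos.mpr hk
  have hqd : q ^ d ≡ 1 [MOD k] := Nat.ModEq.pow_totient hcop
  set u := d + 1 with hu_def
  set a' : Fin N → ℕ := fun i => if i = 0 then 0 else 1 + u * ((a i - 1) % d + d * i.val)
    with ha'_def
  have hai : ∀ i : Fin N, i ≠ 0 → 1 ≤ a i := by
    intro i hi
    have : a 0 < a i := ha ((Fin.pos_iff_ne_zero' i).mpr hi)
    omega
  have hmod : ∀ i : Fin N, a' i ≡ a i [MOD d] := by
    intro i
    by_cases h : i = 0
    · simp only [ha'_def, h, if_pos rfl, ha0]; rfl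
    · have h1 : 1 ≤ a i := hai i h
      simp only [ha'_def, if_neg h]
      have hu1 : u ≡ 1 [MOD d] := Nat.add_mod_left d 1
      have hm : ((a i - 1) % d + d * i.val) ≡ ((a i - 1) + 0) [MOD d] :=
        (Nat.mod_modEq _ _).add (Nat.modEq_zero_iff_dvd.mpr ⟨i.val, rfl⟩)
      calc 1 + u * ((a i - 1) % d + d * i.val)
          ≡ 1 + 1 * ((a i - 1) + 0) [MOD d] := Nat.ModEq.add_left 1 (hu1.mul hm)
        _ = a i := by omega
  refine ⟨∑ i, kd i * q ^ a' i, u, by omega, ?_, a', ?_, by simp [ha'_def], rfl, ?_⟩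
  · have hcong : (∑ i, kd i * q ^ a' i) ≡ (∑ i, kd i * q ^ a i) [MOD k] :=
      modEq_sum _ _ _ _ fun i _ => (pow_mod_congr hqd (hmod i)).mul_left (kd i)
    rw [← hexp] at hcong
    have hkk : k ≡ 0 [MOD k] := Nat.modEq_zero_iff_dvd.mpr dvd_rfl
    exact Nat.modEq_zero_iff_dvd.mp (hcong.trans hkk)
  · intro i j hij
    simp only [ha'_def]
    have hj0 : j ≠ 0 := by
      intro h
      subst h
      rw [Fin.lt_def, Fin.val_zero] at hij
      omega
    by_cases hi0 : i = 0
    · rw [if_pos hi0, if_neg hj0]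
      exact Nat.lt_of_lt_of_le Nat.one_pos (Nat.le_add_right 1 _)
    · rw [if_neg hi0, if_neg hj0]
      have h1 : (a i - 1) % d < d := Nat.mod_lt _ hdpos
      have h2 : i.val < j.val := hij
      have h3 : d * (i.val + 1) ≤ d * j.val := Nat.mul_le_mul_left d (by omega)
      have h4 : d * (i.val + 1) = d * i.val + d := by ring
      have h5 : (a i - 1) % d + d * i.val < (a j - 1) % d + d * j.val := by omega
      have h6 := (Nat.mul_lt_mul_left (show 0 < u by omega)).mpr h5
      omega
  · intro i hi
    simp only [ha'_def, if_neg hi]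
    exact Nat.add_mul_mod_self_left 1 u _
end

section
/- Let q, k ∈ ℕ be relatively prime with k ≥ 2, and let r be the multiplicative order of q modulo k. For any u ∈ ℕ relatively prime to r, there exists k' ∈ ℕ such that k ∣ k' and the sum of the base-q^u digits of k' equals the sum of the base-q digits of k. -/
private lemma sum_digits_base_pow_mul (c : ℕ) (hc : 2 ≤ c) (m N : ℕ) :
    (Nat.digits c (c ^ m * N)).sum = (Nat.digits c N).sum := by
  induction m with
  | zero => simp
  | succ m ih =>
    rcases Nat.eq_zero_or_pos N with rfl | hN
    · simp
    · have h1 : c ^ (m + 1) * N = c * (c ^ m * N) := by ring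
      have h2 : 0 < c * (c ^ m * N) := by positivity
      rw [h1, Nat.digits_def' (by omega : 1 < c) h2,
        Nat.mul_mod_right, Nat.mul_div_cancel_left _ (by omega : 0 < c)]
      simpa using ih

private lemma sum_digits_ofDigits_pow (c s : ℕ) (hc : 2 ≤ c) (hs : 1 ≤ s) :
    ∀ L : List ℕ, (∀ x ∈ L, x < c) →
      (Nat.digits c (Nat.ofDigits (c ^ s) L)).sum = L.sum := by
  intro L
  induction L with
  | nil => simp [Nat.ofDigits]
  | cons d L ih =>
    intro hL
    have hd : d < c := hL d (by simp)
    have hL' : ∀ x ∈ L, x < c := fun x hx => hL x (by simp [hx])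
    set N := Nat.ofDigits (c ^ s) L with hN
    have hcons : Nat.ofDigits (c ^ s) (d :: L) = d + c ^ s * N := by
      simp [Nat.ofDigits_cons, hN]
    rcases Nat.eq_zero_or_pos (d + c ^ s * N) with h0 | hpos
    · have hd0 : d = 0 := by omega
      have hN0 : c ^ s * N = 0 := by omega
      have hN0' : N = 0 := by
        have : c ^ s ≠ 0 := by positivity
        exact (Nat.mul_eq_zero.mp hN0).resolve_left this
      have := ih hL'
      rw [hN0'] at this
      simp only [hcons, h0]
      simp only [List.sum_cons, hd0]
      simpa using this
    · have hrw : d + c ^ s * N = d + c * (c ^ (s - 1) * N) := by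
        have : c ^ s = c * c ^ (s - 1) := by
          rw [← pow_succ']
          congr 1
          omega
        rw [this]; ring
      rw [hcons, hrw, Nat.digits_def' (by omega : 1 < c) (by omega),
        Nat.add_mul_mod_self_left, Nat.mod_eq_of_lt hd,
        Nat.add_mul_div_left _ _ (by omega : 0 < c), Nat.div_eq_of_lt hd]
      simp only [List.sum_cons, zero_add]
      rw [sum_digits_base_pow_mul c hc, ih hL']

theorem pump_digit_sum (q k u : ℕ) (hq : 2 ≤ q) (hk : 2 ≤ k)
    (hcop : Nat.Coprime q k)
    (hu : Nat.Coprime u (orderOf ((q : ZMod k)))) :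
    ∃ k' : ℕ, k ∣ k' ∧ (Nat.digits (q ^ u) k').sum = (Nat.digits q k).sum := by
  haveI : NeZero k := ⟨by omega⟩
  have hunit : IsUnit ((q : ZMod k)) := (ZMod.isUnit_iff_coprime q k).mpr hcop
  obtain ⟨w, hw⟩ := hunit
  have horder : orderOf ((q : ZMod k)) = orderOf w := by rw [← hw, orderOf_units]
  set r := orderOf ((q : ZMod k)) with hr
  have hrpos : 0 < r := by
    rw [horder]; exact orderOf_pos w
  rcases Nat.eq_zero_or_pos u with rfl | hupos
  · -- u = 0 : then r = 1, q ≡ 1 mod k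
    have hr1 : r = 1 := by
      have := hu
      simpa [Nat.Coprime] using this.symm
    have hq1 : (q : ZMod k) = 1 := by
      have := pow_orderOf_eq_one ((q : ZMod k))
      rwa [← hr, hr1, pow_one] at this
    have hmod : q % k = 1 := by
      have : ((q : ℕ) : ZMod k) = ((1 : ℕ) : ZMod k) := by simpa using hq1
      have h2 : q % k = 1 % k := (ZMod.natCast_eq_natCast_iff _ _ _).mp this
      have h3 : 1 % k = 1 := Nat.mod_eq_of_lt (by omega)
      rw [h3] at h2
      exact h2
    have hsum : k ≡ (Nat.digits q k).sum [MOD k] := Nat.modEq_digits_sum k q hmod k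
    have hdvd : k ∣ (Nat.digits q k).sum := by
      have : (Nat.digits q k).sum ≡ 0 [MOD k] := by
        calc (Nat.digits q k).sum ≡ k [MOD k] := hsum.symm
          _ ≡ 0 [MOD k] := (Nat.modEq_zero_iff_dvd).mpr dvd_rfl
      exact (Nat.modEq_zero_iff_dvd).mp this
    exact ⟨(Nat.digits q k).sum, hdvd, by simp [Nat.digits_one]⟩
  · -- u ≥ 1
    set s := u ^ (r.totient - 1) with hs
    have hspos : 1 ≤ s := Nat.one_le_pow _ _ hupos
    have htot : 1 ≤ r.totient := Nat.totient_pos.mpr hrpos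
    have hus : u * s = u ^ r.totient := by
      rw [hs, ← pow_succ']
      congr 1
      omega
    have hmodeq : u * s ≡ 1 [MOD r] := by
      rw [hus]
      exact Nat.ModEq.pow_totient hu
    -- q^(u*s) ≡ q [MOD k]
    have hpow : (q : ZMod k) ^ (u * s) = (q : ZMod k) ^ 1 := by
      rw [← hw, ← Units.val_pow_eq_pow_val, ← Units.val_pow_eq_pow_val]
      congr 1
      rw [pow_eq_pow_iff_modEq]
      exact horder ▸ hmodeq
    have hBq : q ^ (u * s) ≡ q [MOD k] := by
      have : ((q ^ (u * s) : ℕ) : ZMod k) = ((q : ℕ) : ZMod k) := by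
        push_cast
        simpa using hpow
      exact (ZMod.natCast_eq_natCast_iff _ _ _).mp this
    set l := Nat.digits q k with hl
    refine ⟨Nat.ofDigits (q ^ (u * s)) l, ?_, ?_⟩
    · have h1 : Nat.ofDigits (q ^ (u * s)) l ≡ Nat.ofDigits q l [MOD k] :=
        Nat.ofDigits_modEq' _ _ k hBq l
      have h2 : Nat.ofDigits q l = k := Nat.ofDigits_digits q k
      have : Nat.ofDigits (q ^ (u * s)) l ≡ 0 [MOD k] := by
        calc Nat.ofDigits (q ^ (u * s)) l ≡ k [MOD k] := h2 ▸ h1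
          _ ≡ 0 [MOD k] := (Nat.modEq_zero_iff_dvd).mpr dvd_rfl
      exact (Nat.modEq_zero_iff_dvd).mp this
    · have hc : 2 ≤ q ^ u := le_trans hq (Nat.le_self_pow (by omega) q)
      have hlt : ∀ x ∈ l, x < q ^ u := fun x hx =>
        lt_of_lt_of_le (Nat.digits_lt_base hq hx) (Nat.le_self_pow (by omega) q)
      have hrw : q ^ (u * s) = (q ^ u) ^ s := by rw [pow_mul]
      rw [hrw]
      exact sum_digits_ofDigits_pow (q ^ u) s hc hspos l hlt
end

section
/- Let F be an algebraically closed field of characteristic p > 0, let q = p^n, let M ≥ 2 with (M−1) ∣ (q−1), let ω ∈ F be a primitive (M−1)-th root of unity, and let k be relatively prime to p with base-q expansion k = k_1 + k_2 q^{a_2} + ⋯ + k_N q^{a_N} whose digit sum equals M. Then in F[t]: ∑_{j=1}^{M−1} (ω^j + t)^k = (M−1)t^k + (M−1)k_1 t + (M−1)∑_{i=2}^{N} k_i t^{q^{a_i}} + [M = 2]. -/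
open Polynomial

theorem univariate_rootUnity_identity (F : Type*) [Field F] [IsAlgClosed F]
    (p n M N k : ℕ) [Fact p.Prime] [CharP F p] [NeZero N] (hn : 0 < n)
    (hM : 2 ≤ M) (hdvd : (M - 1) ∣ (p ^ n - 1))
    (ω : F) (hω : IsPrimitiveRoot ω (M - 1))
    (hcop : Nat.Coprime k p)
    (kd : Fin N → ℕ) (a : Fin N → ℕ)
    (hdig : ∀ i, kd i < p ^ n) (ha : StrictMono a) (ha0 : a 0 = 0)
    (hexp : k = ∑ i, kd i * (p ^ n) ^ a i)
    (hsum : ∑ i, kd i = M) :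
    ∑ j ∈ Finset.Icc 1 (M - 1), (C (ω ^ j) + X : F[X]) ^ k
      = ((M - 1 : ℕ) : F[X]) * X ^ k
        + ((M - 1 : ℕ) : F[X]) * (kd 0 : F[X]) * X
        + ((M - 1 : ℕ) : F[X]) * ∑ i ∈ Finset.univ.erase (0 : Fin N),
            (kd i : F[X]) * X ^ ((p ^ n) ^ a i)
        + (if M = 2 then 1 else 0) := by
  classical
  set q := p ^ n with hqdef
  set L := M - 1 with hLdef
  have hp1 : 1 < p := (Fact.out : p.Prime).one_lt
  have hq1 : 1 ≤ q := Nat.one_le_pow _ _ (by omega)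
  have hL1 : 1 ≤ L := by omega
  have hωL : ω ^ L = 1 := hω.pow_eq_one
  -- roots of unity are fixed by x ↦ x ^ (q ^ t)
  have hstab : ∀ j t : ℕ, (ω ^ j) ^ q ^ t = ω ^ j := by
    intro j t
    have hc : (ω ^ j) ^ L = 1 := by
      rw [← pow_mul, mul_comm, pow_mul, hωL, one_pow]
    have hcq : (ω ^ j) ^ q = ω ^ j := by
      obtain ⟨d, hd⟩ := hdvd
      have h1 : (ω ^ j) ^ (q - 1) = 1 := by
        rw [hd, pow_mul, hc, one_pow]
      calc (ω ^ j) ^ q = (ω ^ j) ^ (q - 1 + 1) := by rw [Nat.sub_add_cancel hq1]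
        _ = ω ^ j := by rw [pow_succ, h1, one_mul]
    induction t with
    | zero => simp
    | succ t ih => rw [pow_succ, pow_mul, ih, hcq]
  -- the character sum
  have hsig : ∀ m : ℕ, (∑ j ∈ Finset.Icc 1 L, (ω ^ m) ^ j)
      = if L ∣ m then (L : F) else 0 := by
    intro m
    by_cases hdm : L ∣ m
    · rw [if_pos hdm]
      have h1 : ω ^ m = 1 := (hω.pow_eq_one_iff_dvd m).mpr hdm
      simp [h1, Nat.card_Icc]
    · rw [if_neg hdm]
      have hx1 : ω ^ m ≠ 1 := fun h => hdm ((hω.pow_eq_one_iff_dvd m).mp h)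
      have hxL : (ω ^ m) ^ L = 1 := by
        rw [← pow_mul, mul_comm, pow_mul, hωL, one_pow]
      rw [← Finset.Ico_add_one_right_eq_Icc, Finset.sum_Ico_eq_sum_range]
      have h2 : L + 1 - 1 = L := by omega
      rw [h2]
      have h3 : ∀ i ∈ Finset.range L, (ω ^ m) ^ (1 + i) = (ω ^ m) * (ω ^ m) ^ i := by
        intro i _; rw [pow_add, pow_one]
      rw [Finset.sum_congr rfl h3, ← Finset.mul_sum, geom_sum_eq hx1, hxL]
      simp
  have hLM : (L ∣ M) ↔ M = 2 := by
    constructor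
    · intro h
      have hM1 : M = L + 1 := by omega
      rw [hM1] at h
      have h1 : L ∣ 1 := (Nat.dvd_add_right dvd_rfl).mp h
      have h2 : L = 1 := Nat.dvd_one.mp h1
      omega
    · intro h
      have : L = 1 := by omega
      simp [this]
  set S := Fintype.piFinset (fun i : Fin N => Finset.range (kd i + 1)) with hSdef
  have hmemS : ∀ f : Fin N → ℕ, f ∈ S ↔ ∀ i, f i ≤ kd i := by
    intro f
    simp [hSdef, Fintype.mem_piFinset, Nat.lt_succ_iff]
  set g : (Fin N → ℕ) → F[X] := fun f =>
    (∏ i, ((X : F[X]) ^ q ^ a i) ^ f i)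
      * (∏ i, (Nat.choose (kd i) (f i) : F[X]))
      * C (if L ∣ (∑ i, (kd i - f i)) then (L : F) else 0) with hgdef
  -- main reduction
  have key : (∑ j ∈ Finset.Icc 1 L, (C (ω ^ j) + X : F[X]) ^ k) = ∑ f ∈ S, g f := by
    have h1 : ∀ j, (C (ω ^ j) + X : F[X]) ^ k
        = ∑ f ∈ S, (∏ i, ((X : F[X]) ^ q ^ a i) ^ f i)
            * (∏ i, (Nat.choose (kd i) (f i) : F[X]))
            * C (ω ^ j) ^ (∑ i, (kd i - f i)) := by
      intro j
      have h2 : (C (ω ^ j) + X : F[X]) ^ k = ∏ i, (C (ω ^ j) + X ^ q ^ a i) ^ kd i := by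
        rw [hexp, ← Finset.prod_pow_eq_pow_sum]
        refine Finset.prod_congr rfl fun i _ => ?_
        rw [mul_comm (kd i), pow_mul]
        congr 1
        have hqp : q ^ a i = p ^ (n * a i) := by rw [hqdef, ← pow_mul]
        rw [hqp, add_pow_char_pow, ← C_pow, ← hqp, hstab]
      rw [h2]
      have h3 : ∀ i : Fin N, (C (ω ^ j) + X ^ q ^ a i : F[X]) ^ kd i
          = ∑ b ∈ Finset.range (kd i + 1),
              ((X : F[X]) ^ q ^ a i) ^ b * ((Nat.choose (kd i) b : F[X]))
                * C (ω ^ j) ^ (kd i - b) := by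
        intro i
        rw [add_comm, add_pow]
        exact Finset.sum_congr rfl fun b _ => by ring
      rw [Finset.prod_congr rfl fun i _ => h3 i, Finset.prod_univ_sum]
      refine Finset.sum_congr rfl fun f _ => ?_
      rw [Finset.prod_mul_distrib, Finset.prod_mul_distrib, Finset.prod_pow_eq_pow_sum]
    rw [Finset.sum_congr rfl fun j _ => h1 j, Finset.sum_comm]
    refine Finset.sum_congr rfl fun f _ => ?_
    have h4 : ∀ j, (∏ i, ((X : F[X]) ^ q ^ a i) ^ f i)
          * (∏ i, (Nat.choose (kd i) (f i) : F[X]))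
          * C (ω ^ j) ^ (∑ i, (kd i - f i))
        = ((∏ i, ((X : F[X]) ^ q ^ a i) ^ f i)
          * (∏ i, (Nat.choose (kd i) (f i) : F[X])))
          * C ((ω ^ (∑ i, (kd i - f i))) ^ j) := by
      intro j
      rw [← C_pow, ← pow_mul, mul_comm j, pow_mul]
    rw [Finset.sum_congr rfl fun j _ => h4 j, ← Finset.mul_sum, ← map_sum, hsig]
  rw [key]
  -- the surviving index set
  set T : Finset (Fin N → ℕ) := insert kd (insert (0 : Fin N → ℕ)
      ((Finset.univ.filter fun i => kd i ≠ 0).image fun i => (Pi.single i 1 : Fin N → ℕ)))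
    with hTdef
  have hTS : T ⊆ S := by
    intro f hf
    rw [hTdef] at hf
    simp only [Finset.mem_insert, Finset.mem_image, Finset.mem_filter, Finset.mem_univ,
      true_and] at hf
    rcases hf with h | h | ⟨i, hi, h⟩
    · rw [h]; exact (hmemS kd).mpr fun i => le_rfl
    · rw [h]; exact (hmemS 0).mpr fun i => Nat.zero_le _
    · rw [← h]
      refine (hmemS _).mpr fun j => ?_
      by_cases hj : j = i
      · subst hj; simpa [Pi.single_eq_same] using Nat.one_le_iff_ne_zero.mpr hi
      · simp [Pi.single_eq_of_ne hj]
  have hzero : ∀ f ∈ S, f ∉ T → g f = 0 := by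
    intro f hfS hfT
    rw [hTdef] at hfT
    simp only [Finset.mem_insert, Finset.mem_image, Finset.mem_filter, Finset.mem_univ,
      true_and] at hfT
    push_neg at hfT
    obtain ⟨hfkd, hf0, hfs⟩ := hfT
    have hfle : ∀ i, f i ≤ kd i := (hmemS f).mp hfS
    have hmf : (∑ i, (kd i - f i)) = M - ∑ i, f i := by
      rw [Finset.sum_tsub_distrib (hfg := fun i _ => hfle i), hsum]
    have hsle : (∑ i, f i) ≤ M := hsum ▸ Finset.sum_le_sum (fun i _ => hfle i)
    suffices h : ¬ L ∣ (∑ i, (kd i - f i)) by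
      simp only [hgdef, if_neg h, map_zero, mul_zero]
    rw [hmf]
    intro hdvd2
    set s := ∑ i, f i with hsdef
    have hs0 : s ≠ 0 := by
      intro h0
      apply hf0
      funext i
      exact (Finset.sum_eq_zero_iff).mp h0.symm.symm i (Finset.mem_univ i)
    have hs1 : s ≠ 1 := by
      intro h1
      obtain ⟨i, hi⟩ : ∃ i, f i ≠ 0 := by
        by_contra hc
        push_neg at hc
        rw [hsdef] at h1
        simp [hc] at h1
      have hfile : f i ≤ s := Finset.single_le_sum (fun _ _ => Nat.zero_le _) (Finset.mem_univ i)
      have hfi1 : f i = 1 := by omega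
      have herase : (∑ j ∈ Finset.univ.erase i, f j) + f i = s :=
        Finset.sum_erase_add _ _ (Finset.mem_univ i)
      have hrest : ∀ j, j ≠ i → f j = 0 := by
        intro j hj
        have h2 : (∑ j ∈ Finset.univ.erase i, f j) = 0 := by omega
        exact (Finset.sum_eq_zero_iff).mp h2 j (Finset.mem_erase.mpr ⟨hj, Finset.mem_univ j⟩)
      have hkdi : kd i ≠ 0 := by
        have := hfle i; omega
      apply hfs i hkdi
      funext j
      by_cases hj : j = i
      · subst hj; simp [Pi.single_eq_same, hfi1]
      · simp [Pi.single_eq_of_ne hj, hrest j hj]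
    have hsM : s ≠ M := by
      intro hsM
      apply hfkd
      funext i
      by_contra hne
      have hlt : f i < kd i := lt_of_le_of_ne (hfle i) hne
      have : s < M := hsum ▸ Finset.sum_lt_sum (fun j _ => hfle j) ⟨i, Finset.mem_univ i, hlt⟩
      omega
    have hpos : 0 < M - s := by omega
    have hle := Nat.le_of_dvd hpos hdvd2
    omega
  rw [← Finset.sum_subset hTS hzero]
  -- distinctness of the pieces of T
  have hsingle_sum : ∀ i : Fin N, (∑ j, (Pi.single i 1 : Fin N → ℕ) j) = 1 := by
    intro i
    simp [Finset.sum_pi_single']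
  have hkdnotmem : kd ∉ insert (0 : Fin N → ℕ)
      ((Finset.univ.filter fun i => kd i ≠ 0).image fun i => (Pi.single i 1 : Fin N → ℕ)) := by
    simp only [Finset.mem_insert, Finset.mem_image, Finset.mem_filter, Finset.mem_univ, true_and]
    push_neg
    constructor
    · intro h
      rw [h] at hsum
      simp at hsum
      omega
    · intro i hi heq
      have h1 := hsingle_sum i
      rw [heq, hsum] at h1
      omega
  have h0notmem : (0 : Fin N → ℕ) ∉
      ((Finset.univ.filter fun i => kd i ≠ 0).image fun i => (Pi.single i 1 : Fin N → ℕ)) := by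
    simp only [Finset.mem_image, Finset.mem_filter, Finset.mem_univ, true_and]
    rintro ⟨i, hi, heq⟩
    have h1 := hsingle_sum i
    rw [heq] at h1
    simp at h1
  have hinj : ∀ i ∈ (Finset.univ.filter fun i => kd i ≠ 0),
      ∀ j ∈ (Finset.univ.filter fun i => kd i ≠ 0),
      (Pi.single i 1 : Fin N → ℕ) = Pi.single j 1 → i = j := by
    intro i _ j _ heq
    by_contra hne
    have h1 : (Pi.single i 1 : Fin N → ℕ) i = (Pi.single j 1 : Fin N → ℕ) i := by rw [heq]
    rw [Pi.single_eq_same, Pi.single_eq_of_ne hne] at h1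
    exact one_ne_zero h1
  rw [hTdef, Finset.sum_insert hkdnotmem, Finset.sum_insert h0notmem, Finset.sum_image hinj]
  -- compute g kd
  have hgkd : g kd = ((L : ℕ) : F[X]) * X ^ k := by
    have hA : (∏ i, ((X : F[X]) ^ q ^ a i) ^ kd i) = X ^ k := by
      have h1 : ∀ i : Fin N, ((X : F[X]) ^ q ^ a i) ^ kd i = X ^ (kd i * q ^ a i) := by
        intro i; rw [← pow_mul, mul_comm]
      rw [Finset.prod_congr rfl fun i _ => h1 i, Finset.prod_pow_eq_pow_sum, ← hexp]
    have hC : (∑ i, (kd i - kd i)) = 0 := by simp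
    simp only [hgdef, hA, hC, Nat.choose_self, Nat.cast_one, Finset.prod_const_one,
      dvd_zero, if_pos, mul_one, map_natCast]
    ring
  -- compute g 0
  have hg0 : g 0 = (if M = 2 then 1 else 0 : F[X]) := by
    simp only [hgdef, Pi.zero_apply, pow_zero, Finset.prod_const_one, Nat.sub_zero,
      Nat.choose_zero_right, Nat.cast_one, hsum, one_mul, mul_one]
    by_cases h2 : M = 2
    · have hL' : L = 1 := by omega
      rw [if_pos (hLM.mpr h2), if_pos h2, hL']
      simp
    · rw [if_neg (fun h => h2 (hLM.mp h)), if_neg h2, map_zero]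
  -- compute g (Pi.single i 1)
  have hgsingle : ∀ i : Fin N, kd i ≠ 0 →
      g (Pi.single i 1) = ((L : ℕ) : F[X]) * (kd i : F[X]) * X ^ q ^ a i := by
    intro i hi
    have hA : (∏ j, ((X : F[X]) ^ q ^ a j) ^ ((Pi.single i 1 : Fin N → ℕ) j)) = X ^ q ^ a i := by
      rw [Finset.prod_eq_single i (fun j _ hj => by simp [Pi.single_eq_of_ne hj]) (by simp)]
      simp [Pi.single_eq_same]
    have hB : (∏ j, (Nat.choose (kd j) ((Pi.single i 1 : Fin N → ℕ) j) : F[X]))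
        = (kd i : F[X]) := by
      rw [Finset.prod_eq_single i (fun j _ hj => by simp [Pi.single_eq_of_ne hj]) (by simp)]
      simp [Pi.single_eq_same, Nat.choose_one_right]
    have hC : (∑ j, (kd j - (Pi.single i 1 : Fin N → ℕ) j)) = L := by
      rw [Finset.sum_tsub_distrib (hfg := ?_)]
      · rw [hsum, hsingle_sum i, hLdef]
      · intro j _
        by_cases hj : j = i
        · subst hj; simpa [Pi.single_eq_same] using Nat.one_le_iff_ne_zero.mpr hi
        · simp [Pi.single_eq_of_ne hj]
    simp only [hgdef, hA, hB, hC, if_pos dvd_rfl, map_natCast]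
    ring
  rw [hgkd, hg0, Finset.sum_congr rfl fun i hi =>
    hgsingle i (by simpa using (Finset.mem_filter.mp hi).2)]
  -- extend the filtered sum to all of univ
  have hext : (∑ i ∈ (Finset.univ.filter fun i => kd i ≠ 0),
        ((L : ℕ) : F[X]) * (kd i : F[X]) * X ^ q ^ a i)
      = ∑ i : Fin N, ((L : ℕ) : F[X]) * (kd i : F[X]) * X ^ q ^ a i := by
    rw [Finset.sum_filter]
    refine Finset.sum_congr rfl fun i _ => ?_
    by_cases hi : kd i = 0
    · simp [hi]
    · simp [hi]
  rw [hext, ← Finset.sum_erase_add _ _ (Finset.mem_univ (0 : Fin N)), ha0]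
  have hX1 : ((X : F[X]) ^ q ^ (0 : ℕ)) = X := by
    rw [pow_zero, pow_one]
  rw [hX1]
  have herase : (∑ i ∈ Finset.univ.erase (0 : Fin N),
        ((L : ℕ) : F[X]) * (kd i : F[X]) * X ^ q ^ a i)
      = ((L : ℕ) : F[X]) * ∑ i ∈ Finset.univ.erase (0 : Fin N),
          (kd i : F[X]) * X ^ q ^ a i := by
    rw [Finset.mul_sum]
    exact Finset.sum_congr rfl fun i _ => by ring
  rw [herase]
  ring
end

section
/- Let p be a prime and k ∈ ℕ coprime to p with k ∣ p^r + 1 for some r ∈ ℕ. Then every polynomial over an algebraically closed field of characteristic p is a sum of at most 3 k-th powers, i.e. v(p,k) ≤ 3. -/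
noncomputable def waring (F : Type*) [Field F] (k : ℕ) : ℕ∞ :=
  sInf {s : ℕ∞ | ∃ n : ℕ, s = n ∧
    ∀ f : Polynomial F, ∃ y : Fin n → Polynomial F, f = ∑ i, y i ^ k}

open Polynomial in
/-- Every polynomial over an algebraically closed field of characteristic `p` is a
sum of three `(p^s+1)`-th powers, for `s ≥ 1`. -/
lemma key_sum_three (F : Type*) [Field F] [IsAlgClosed F]
    (p : ℕ) [Fact p.Prime] [CharP F p] (s : ℕ) (hs : s ≠ 0) (f : Polynomial F) :
    ∃ z : Fin 3 → Polynomial F, f = ∑ i, z i ^ (p ^ s + 1) := by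
  have hp1 : 1 < p := (Fact.out : p.Prime).one_lt
  set q : ℕ := p ^ s with hq
  have hq2 : 2 ≤ q := by
    calc 2 ≤ p := hp1
    _ = p ^ 1 := (pow_one p).symm
    _ ≤ p ^ s := Nat.pow_le_pow_right (by omega) (by omega)
  -- there is `a` with `a ^ q = a + 1`
  obtain ⟨a, ha⟩ : ∃ a : F, a ^ q = a + 1 := by
    have hdeg : ((X : Polynomial F) ^ q - (X + 1)).degree = (q : WithBot ℕ) := by
      rw [degree_sub_eq_left_of_degree_lt, degree_X_pow]
      rw [degree_X_pow]
      calc ((X : Polynomial F) + 1).degree ≤ 1 := by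
            simpa using degree_add_le (X : Polynomial F) 1
      _ < (q : WithBot ℕ) := by exact_mod_cast (by omega : 1 < q)
    obtain ⟨a, ha⟩ := IsAlgClosed.exists_root ((X : Polynomial F) ^ q - (X + 1))
      (by rw [hdeg]; exact_mod_cast (by omega : q ≠ 0))
    refine ⟨a, ?_⟩
    have := ha
    simp only [IsRoot, eval_sub, eval_pow, eval_X, eval_add, eval_one] at this
    linear_combination this
  -- scalars that are `(q+1)`-th powers
  obtain ⟨l₁, hl₁⟩ := IsAlgClosed.exists_pow_nat_eq (k := F) (a - 1) (n := q + 1) (by omega)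
  obtain ⟨l₂, hl₂⟩ := IsAlgClosed.exists_pow_nat_eq (k := F) (-a) (n := q + 1) (by omega)
  set x : Polynomial F := f - C (a ^ 2) with hx
  refine ⟨![C l₁ * x, C l₂ * (x + 1), x + C a], ?_⟩
  have frob : ∀ u v : Polynomial F, (u + v) ^ q = u ^ q + v ^ q := fun u v =>
    add_pow_char_pow ..
  have e1 : (C l₁ * x) ^ (q + 1) = (C a - 1) * (x ^ q * x) := by
    rw [mul_pow, ← map_pow, hl₁, pow_succ, map_sub, map_one]
  have e2 : (C l₂ * (x + 1)) ^ (q + 1) = (- C a) * ((x ^ q + 1) * (x + 1)) := by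
    rw [mul_pow, ← map_pow, hl₂, pow_succ, frob, one_pow, map_neg]
  have e3 : (x + C a) ^ (q + 1) = (x ^ q + (C a + 1)) * (x + C a) := by
    rw [pow_succ, frob, ← map_pow, ha, map_add, map_one]
  rw [Fin.sum_univ_three]
  simp only [Matrix.cons_val_zero, Matrix.cons_val_one, Matrix.head_cons,
    Matrix.cons_val_two, Matrix.tail_cons]
  rw [e1, e2, e3, hx, map_pow]
  ring

theorem waring_le_three (F : Type*) [Field F] [IsAlgClosed F]
    (p k r : ℕ) [Fact p.Prime] [CharP F p]
    (hcop : Nat.Coprime k p) (hdvd : k ∣ p ^ r + 1) :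
    waring F k ≤ 3 := by
  have hp : p.Prime := Fact.out
  have hk0 : k ≠ 0 := by
    rintro rfl
    simp [Nat.Coprime] at hcop
    omega
  have main : ∀ f : Polynomial F, ∃ y : Fin 3 → Polynomial F, f = ∑ i, y i ^ k := by
    intro f
    rcases eq_or_ne k 1 with rfl | hk1
    · exact ⟨![f, 0, 0], by simp [Fin.sum_univ_three]⟩
    · -- obtain s ≠ 0 with k ∣ p ^ s + 1
      obtain ⟨s, hs0, hd⟩ : ∃ s : ℕ, s ≠ 0 ∧ k ∣ p ^ s + 1 := by
        rcases eq_or_ne r 0 with rfl | hr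
        · -- then k ∣ 2, k ≠ 0, k ≠ 1 so k = 2 and p is odd
          have hk2 : k = 2 := by
            have := Nat.le_of_dvd (by norm_num : (0:ℕ) < 2) (by simpa using hdvd)
            interval_cases k <;> simp_all
          subst hk2
          have hpodd : p % 2 = 1 := by
            have h2 : ¬ (2 ∣ p) := fun h => by
              have := hcop.eq_one_of_dvd h
              omega
            omega
          exact ⟨1, one_ne_zero, by rw [pow_one]; omega⟩
        · exact ⟨r, hr, hdvd⟩
      obtain ⟨z, hz⟩ := key_sum_three F p s hs0 f
      refine ⟨fun i => z i ^ ((p ^ s + 1) / k), ?_⟩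
      rw [hz]
      refine Finset.sum_congr rfl fun i _ => ?_
      rw [← pow_mul, Nat.div_mul_cancel hd]
  have hmem : (3 : ℕ∞) ∈ {s : ℕ∞ | ∃ n : ℕ, s = n ∧
      ∀ f : Polynomial F, ∃ y : Fin n → Polynomial F, f = ∑ i, y i ^ k} :=
    ⟨3, by norm_num, main⟩
  exact sInf_le hmem
end

section
/- Let p be an odd prime, k ∈ ℕ coprime to p, and suppose p has odd multiplicative order in (ℤ/kℤ)^×. If c is the least nonnegative integer with γ_p(k) ≤ 2^c + 1, then v(p,k) ≤ 2^{c+1} + [γ_p(k) = 2^c + 1], and moreover this bound is strictly less than 4·γ_p(k). -/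
/-- Every positive natural number is a sum of `(digits p n).sum` powers of `p`,
with a power `p^0` present when `p ∤ n`. -/
private lemma waring_units_aux (p : ℕ) (hp : 1 < p) :
    ∀ n : ℕ, ∃ (w : ℕ) (u : Fin w → ℕ), w = (Nat.digits p n).sum ∧
      n = ∑ j, p ^ u j ∧ (¬ p ∣ n → ∃ j, u j = 0) := by
  intro n
  induction n using Nat.strong_induction_on with
  | _ n ih =>
    rcases eq_or_ne n 0 with rfl | hn
    · exact ⟨0, Fin.elim0, by simp, by simp, fun h => absurd (dvd_zero p) h⟩
    · have hd := Nat.digits_def' hp (Nat.pos_of_ne_zero hn)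
      obtain ⟨w', u', hw', hn', -⟩ :=
        ih (n / p) (Nat.div_lt_self (Nat.pos_of_ne_zero hn) hp)
      refine ⟨n % p + w', Fin.addCases (fun _ => 0) (fun j => u' j + 1), ?_, ?_, ?_⟩
      · rw [hd]; simp [hw']
      · rw [Fin.sum_univ_add]
        have h1 : ∑ i : Fin (n % p), p ^ (Fin.addCases (fun _ => (0:ℕ))
            (fun j => u' j + 1) (Fin.castAdd w' i)) = n % p := by
          simp [Fin.addCases_left]
        have h2 : ∑ j : Fin w', p ^ (Fin.addCases (fun _ => (0:ℕ))
            (fun j => u' j + 1) (Fin.natAdd (n % p) j)) = p * (n / p) := by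
          simp only [Fin.addCases_right]
          calc ∑ x : Fin w', p ^ (u' x + 1) = ∑ x : Fin w', p * p ^ (u' x) := by
                apply Finset.sum_congr rfl; intros; ring
            _ = p * ∑ x : Fin w', p ^ (u' x) := by rw [Finset.mul_sum]
            _ = p * (n / p) := by rw [← hn']
        rw [h1, h2]
        exact (Nat.mod_add_div n p).symm
      · intro hpd
        have h0 : 0 < n % p := by
          rcases Nat.eq_zero_or_pos (n % p) with h | h
          · exact absurd (Nat.dvd_of_mod_eq_zero h) hpd
          · exact h
        exact ⟨Fin.castAdd w' ⟨0, h0⟩, Fin.addCases_left _⟩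

open Polynomial in
/-- Core: every polynomial is a sum of `(digits p k).sum + 1` many `k`-th powers. -/
private lemma waring_core (F : Type*) [Field F] [IsAlgClosed F]
    (p k : ℕ) [Fact p.Prime] [CharP F p] (hodd : Odd p)
    (hcop : Nat.Coprime k p)
    (horder : Odd (orderOf ((p : ZMod k)))) :
    ∀ f : Polynomial F, ∃ y : Fin ((Nat.digits p k).sum + 1) → Polynomial F,
      f = ∑ i, y i ^ k := by
  classical
  have hp : p.Prime := Fact.out
  have hp2 : 2 ≤ p := hp.two_le
  have hp3 : 3 ≤ p := by
    have := hodd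
    rcases this with ⟨t, ht⟩
    omega
  have hk0 : k ≠ 0 := by
    intro h
    subst h
    have : Nat.gcd 0 p = 1 := hcop
    simp at this
    omega
  have hpk : ¬ p ∣ k := by
    intro h
    have h2 : p ∣ Nat.gcd k p := Nat.dvd_gcd h dvd_rfl
    rw [hcop] at h2
    have := Nat.le_of_dvd one_pos h2
    omega
  -- units decomposition of k
  obtain ⟨w, u, hw, hku, hz⟩ := waring_units_aux p (by omega) k
  obtain ⟨j₀, hj₀⟩ := hz hpk
  rw [← hw]
  -- the erased index set
  set s : Finset (Fin w) := Finset.univ.erase j₀ with hs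
  have hks : k = 1 + ∑ j ∈ s, p ^ u j := by
    have h := Finset.add_sum_erase Finset.univ (fun j => p ^ u j) (Finset.mem_univ j₀)
    rw [hj₀, pow_zero] at h
    rw [hku, ← h]
  have hscard : s.card = w - 1 := by
    rw [hs, Finset.card_erase_of_mem (Finset.mem_univ j₀), Finset.card_univ, Fintype.card_fin]
  have hw1 : 1 ≤ w := by
    rcases Nat.eq_zero_or_pos w with h | h
    · exact absurd h (by subst h; exact (Fin.elim0 j₀ : False).elim)
    · exact h
  -- order of p mod k
  set r := orderOf ((p : ZMod k)) with hr
  have hrodd : Odd r := horder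
  -- choice of e and ℓ
  set e := max w 2 with he
  have he2 : 2 ≤ e := le_max_right _ _
  have hwe : w ≤ 2 ^ e := by
    calc w ≤ 2 ^ w := le_of_lt (Nat.lt_two_pow_self (n := w))
    _ ≤ 2 ^ e := Nat.pow_le_pow_right (by omega) (le_max_left _ _)
  set T := p ^ (2 ^ (e - 1)) with hT
  have hT8 : T % 8 = 1 := by
    have hps : p ^ 2 % 8 = 1 := by
      have hpm : p % 2 = 1 := Nat.odd_iff.mp hodd
      have h8 : p % 8 = 1 ∨ p % 8 = 3 ∨ p % 8 = 5 ∨ p % 8 = 7 := by omega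
      rw [Nat.pow_mod]
      rcases h8 with h | h | h | h <;> rw [h] <;> norm_num
    have h2e : 2 ^ (e - 1) = 2 * 2 ^ (e - 2) := by
      rw [← pow_succ']
      congr 1
      omega
    rw [hT, h2e, pow_mul, Nat.pow_mod, hps, one_pow]
    omega
  have hT9 : 9 ≤ T := by
    calc (9:ℕ) = 3 ^ 2 := by norm_num
    _ ≤ 3 ^ (2 ^ (e-1)) := Nat.pow_le_pow_right (by omega) (by
        calc 2 = 2^1 := by norm_num
        _ ≤ 2 ^ (e-1) := Nat.pow_le_pow_right (by omega) (by omega))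
    _ ≤ p ^ (2 ^ (e-1)) := Nat.pow_le_pow_left hp3 _
  set ℓ := Nat.minFac ((T + 1) / 2) with hℓ
  have hPodd : ((T + 1) / 2) % 2 = 1 := by omega
  have hP1 : 1 < (T + 1) / 2 := by omega
  have hℓp : ℓ.Prime := Nat.minFac_prime (by omega)
  have hℓdvd : ℓ ∣ (T + 1) / 2 := Nat.minFac_dvd _
  have hℓ2 : ℓ ≠ 2 := by
    intro h
    rw [h] at hℓdvd
    omega
  have hℓ3 : 3 ≤ ℓ := by
    have := hℓp.two_le
    omega
  have hℓT : ℓ ∣ T + 1 := hℓdvd.trans (Dvd.intro_left 2 (by omega))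
  have hℓnp : ℓ ≠ p := by
    intro h
    have h1 : p ∣ T + 1 := h ▸ hℓT
    have h2 : p ∣ T := dvd_pow_self p (by positivity)
    have h3 : p ∣ 1 := (Nat.dvd_add_right h2).mp h1
    have := Nat.le_of_dvd one_pos h3
    omega
  haveI : Fact ℓ.Prime := ⟨hℓp⟩
  have hm1 : (p : ZMod ℓ) ^ (2 ^ (e - 1)) = -1 := by
    have h0 : ((p ^ (2 ^ (e - 1)) + 1 : ℕ) : ZMod ℓ) = 0 := by
      rw [← hT]
      exact (ZMod.natCast_eq_zero_iff _ _).mpr hℓT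
    push_cast at h0
    linear_combination h0
  have hm2 : (p : ZMod ℓ) ^ (2 ^ e) = 1 := by
    have h2e : 2 ^ e = 2 ^ (e - 1) * 2 := by
      rw [← pow_succ]
      congr 1
      omega
    rw [h2e, pow_mul, hm1]
    ring
  -- order of p in (ZMod ℓ)ˣ is 2^e, hence 2^e ∣ ℓ - 1
  have hcopℓ : Nat.Coprime p ℓ := (Nat.coprime_primes hp hℓp).mpr (Ne.symm hℓnp)
  set η : (ZMod ℓ)ˣ := ZMod.unitOfCoprime p hcopℓ with hη
  have hηval : ((η : (ZMod ℓ)ˣ) : ZMod ℓ) = (p : ZMod ℓ) := ZMod.coe_unitOfCoprime p hcopℓ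
  have hne11 : (-1 : ZMod ℓ) ≠ 1 := by
    intro h
    have h2 : ((2:ℕ) : ZMod ℓ) = 0 := by
      push_cast
      linear_combination -h
    have := (ZMod.natCast_eq_zero_iff 2 ℓ).mp h2
    have := Nat.le_of_dvd (by norm_num) this
    omega
  have hη2e : η ^ (2 ^ e) = 1 := by
    ext
    push_cast
    rw [hηval]
    exact hm2
  have hηe1 : η ^ (2 ^ (e-1)) ≠ 1 := by
    intro h
    apply hne11
    have : ((η ^ (2 ^ (e-1)) : (ZMod ℓ)ˣ) : ZMod ℓ) = ((1 : (ZMod ℓ)ˣ) : ZMod ℓ) := by rw [h]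
    push_cast at this
    rw [hηval] at this
    rw [← hm1, this]
  have hdvd2e : 2 ^ e ∣ ℓ - 1 := by
    have hd : orderOf η ∣ 2 ^ e := orderOf_dvd_of_pow_eq_one hη2e
    obtain ⟨i, hie, hoi⟩ := (Nat.dvd_prime_pow Nat.prime_two).mp hd
    have hieq : i = e := by
      by_contra hne
      have hile : i ≤ e - 1 := by omega
      have : orderOf η ∣ 2 ^ (e-1) := hoi ▸ pow_dvd_pow 2 hile
      exact hηe1 (orderOf_dvd_iff_pow_eq_one.mp this)
    have hcard : orderOf η ∣ ℓ - 1 := by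
      have := orderOf_dvd_card (G := (ZMod ℓ)ˣ) (x := η)
      rwa [ZMod.card_units ℓ] at this
    rw [hoi, hieq] at hcard
    exact hcard
  have hℓge : 2 ^ e + 1 ≤ ℓ := by
    have h1 : 2 ^ e ≤ ℓ - 1 := Nat.le_of_dvd (by omega) hdvd2e
    omega
  have hwℓ : w + 1 ≤ ℓ := by omega
  -- primitive ℓ-th root of unity
  haveI : NeZero ((ℓ : ℕ) : F) := by
    constructor
    rw [Ne, CharP.cast_eq_zero_iff F p ℓ]
    intro h
    rcases (Nat.Prime.eq_one_or_self_of_dvd hℓp p h) with h1 | h1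
    · omega
    · exact hℓnp h1.symm
  obtain ⟨ζ, hζroot⟩ := IsAlgClosed.exists_root (Polynomial.cyclotomic ℓ F) (by
    rw [Polynomial.degree_cyclotomic]
    have h1 : ℓ.totient ≠ 0 := (Nat.totient_pos.mpr (by omega)).ne'
    exact_mod_cast h1)
  have hprim : IsPrimitiveRoot ζ ℓ := (Polynomial.isRoot_cyclotomic_iff).mp hζroot
  have hζℓ : ζ ^ ℓ = 1 := hprim.pow_eq_one
  have hζmod : ∀ a b : ℕ, a % ℓ = b % ℓ → ζ ^ a = ζ ^ b := by
    intro a b h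
    have ha : ζ ^ a = ζ ^ (a % ℓ) := by
      conv_lhs => rw [← Nat.div_add_mod a ℓ]
      rw [pow_add, pow_mul, hζℓ, one_pow, one_mul]
    have hb : ζ ^ b = ζ ^ (b % ℓ) := by
      conv_lhs => rw [← Nat.div_add_mod b ℓ]
      rw [pow_add, pow_mul, hζℓ, one_pow, one_mul]
    rw [ha, hb, h]
  have hζinj : ∀ a b : ℕ, a < ℓ → b < ℓ → ζ ^ a = ζ ^ b → a = b :=
    fun a b ha hb h => hprim.pow_inj ha hb h
  -- CRT exponents
  have hrcop : Nat.Coprime r (2 ^ e) := by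
    apply Nat.Coprime.pow_right
    have h2 : ¬ (2 ∣ r) := by
      have := Nat.odd_iff.mp hrodd
      omega
    exact (Nat.coprime_comm.mp ((Nat.prime_two.coprime_iff_not_dvd).mpr h2))
  set m : Fin w → ℕ := fun j => (Nat.chineseRemainder hrcop (u j) (2 ^ (e-1))).1 with hm
  have hmr : ∀ j, (m j) % r = (u j) % r := fun j => (Nat.chineseRemainder hrcop (u j) (2 ^ (e-1))).2.1
  have hme : ∀ j, (m j) % (2 ^ e) = 2 ^ (e-1) := by
    intro j
    have h1 : (m j) % (2^e) = (2^(e-1)) % (2^e) := (Nat.chineseRemainder hrcop (u j) (2 ^ (e-1))).2.2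
    rw [h1]
    exact Nat.mod_eq_of_lt (Nat.pow_lt_pow_right (by omega) (by omega))
  -- p^(m j) ≡ p^(u j)  mod k
  have hpr : ∀ a b : ℕ, a % r = b % r → (p : ZMod k) ^ a = (p : ZMod k) ^ b := by
    intro a b h
    have ha : (p : ZMod k) ^ a = ((p : ZMod k) ^ r) ^ (a / r) * (p : ZMod k) ^ (a % r) := by
      rw [← pow_mul, ← pow_add]
      congr 1
      exact (Nat.div_add_mod a r).symm
    have hb : (p : ZMod k) ^ b = ((p : ZMod k) ^ r) ^ (b / r) * (p : ZMod k) ^ (b % r) := by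
      rw [← pow_mul, ← pow_add]
      congr 1
      exact (Nat.div_add_mod b r).symm
    rw [ha, hb, hr, pow_orderOf_eq_one, one_pow, one_pow, h]
  have hmk : ∀ j, (p : ZMod k) ^ (m j) = (p : ZMod k) ^ (u j) := fun j => hpr _ _ (hmr j)
  -- p^(m j) ≡ -1 ≡ ℓ - 1  mod ℓ
  have hmℓz : ∀ j, (p : ZMod ℓ) ^ (m j) = -1 := by
    intro j
    have h1 : m j = 2 ^ e * (m j / 2 ^ e) + 2 ^ (e-1) := by
      conv_lhs => rw [← Nat.div_add_mod (m j) (2^e)]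
      rw [hme j]
    rw [h1, pow_add, pow_mul, hm2, one_pow, one_mul, hm1]
  have hmℓ : ∀ j, (p ^ (m j)) % ℓ = (ℓ - 1) % ℓ := by
    intro j
    have h1 : ((p ^ (m j) : ℕ) : ZMod ℓ) = (((ℓ - 1 : ℕ)) : ZMod ℓ) := by
      push_cast
      rw [hmℓz j, Nat.cast_sub (by omega : 1 ≤ ℓ)]
      rw [ZMod.natCast_self]
      ring
    exact (ZMod.natCast_eq_natCast_iff _ _ _).mp h1
  have hζm : ∀ j, ζ ^ (p ^ (m j)) = ζ ^ (ℓ - 1) := fun j => hζmod _ _ (hmℓ j)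
  -- the exponent K
  set K := 1 + ∑ j ∈ s, p ^ (m j) with hK
  haveI : NeZero k := ⟨hk0⟩
  have hkK : k ∣ K := by
    apply (ZMod.natCast_eq_zero_iff K k).mp
    have h1 : ((K : ℕ) : ZMod k) = 1 + ∑ j ∈ s, (p : ZMod k) ^ (m j) := by
      rw [hK]
      push_cast
      ring
    rw [h1]
    have h2 : ∑ j ∈ s, (p : ZMod k) ^ (m j) = ∑ j ∈ s, (p : ZMod k) ^ (u j) :=
      Finset.sum_congr rfl (fun j _ => hmk j)
    rw [h2]
    have h3 : (1 : ZMod k) + ∑ j ∈ s, (p : ZMod k) ^ (u j) = ((1 + ∑ j ∈ s, p ^ (u j) : ℕ) : ZMod k) := by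
      push_cast
      ring
    rw [h3, ← hks, ZMod.natCast_self]
  -- nodes for the Vandermonde system
  set Ee : ℕ → ℕ := fun i => (ℓ + 1 - i) % ℓ with hEe
  set x : Fin (w+1) → F := fun i => ζ ^ (Ee (i:ℕ)) with hx
  have hEcast : ∀ i : ℕ, i ≤ w → ((Ee i : ℕ) : ZMod ℓ) = 1 - (i : ZMod ℓ) := by
    intro i hi
    rw [hEe]
    simp only []
    rw [ZMod.natCast_mod, Nat.cast_sub (by omega : i ≤ ℓ + 1)]
    push_cast
    rw [ZMod.natCast_self]
    ring
  have hEelt : ∀ i : ℕ, Ee i < ℓ := fun i => Nat.mod_lt _ (by omega)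
  have hxinj : Function.Injective x := by
    intro i j hij
    have hE : Ee (i:ℕ) = Ee (j:ℕ) := hζinj _ _ (hEelt _) (hEelt _) hij
    have hc : ((i:ℕ) : ZMod ℓ) = ((j:ℕ) : ZMod ℓ) := by
      have h1 := hEcast (i:ℕ) (by omega)
      have h2 := hEcast (j:ℕ) (by omega)
      rw [hE] at h1
      rw [h1] at h2
      exact (sub_right_inj).mp h2
    have hval : (i:ℕ) = (j:ℕ) := by
      have h1 : (((i:ℕ) : ZMod ℓ)).val = (((j:ℕ) : ZMod ℓ)).val := by rw [hc]
      rwa [ZMod.val_cast_of_lt (by omega), ZMod.val_cast_of_lt (by omega)] at h1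
    exact Fin.ext hval
  -- Vandermonde weights
  set V : Matrix (Fin (w+1)) (Fin (w+1)) F := Matrix.vandermonde x with hV
  have hdet : IsUnit V.det := by
    rw [hV, Matrix.det_vandermonde]
    rw [isUnit_iff_ne_zero]
    rw [Finset.prod_ne_zero_iff]
    intro i _
    rw [Finset.prod_ne_zero_iff]
    intro j hj
    have : x j ≠ x i := fun h => (Finset.mem_Ioi.mp hj).ne' (hxinj h)
    exact sub_ne_zero_of_ne this
  set δv : Fin (w+1) → F := fun i => if (i:ℕ) = w then 1 else 0 with hδv
  set cv : Fin (w+1) → F := Matrix.mulVec V⁻¹ δv with hcv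
  have hMom : ∀ i : Fin (w+1), ∑ v : Fin (w+1), cv v * (x i) ^ (v:ℕ) = δv i := by
    intro i
    have h1 : V.mulVec cv = δv := by
      rw [hcv, Matrix.mulVec_mulVec, Matrix.mul_nonsing_inv V hdet, Matrix.one_mulVec]
    calc ∑ v : Fin (w+1), cv v * (x i) ^ (v:ℕ)
        = ∑ v : Fin (w+1), V i v * cv v := by
          apply Finset.sum_congr rfl
          intro v _
          rw [hV, Matrix.vandermonde_apply]
          ring
      _ = (V.mulVec cv) i := by
          rw [Matrix.mulVec]
          rfl
      _ = δv i := by rw [h1]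
  -- node identifications
  set β : F := ζ ^ (ℓ - 1) with hβ
  have hnode1 : ∀ (E : ℕ) (hE : E + 1 < w + 1), β ^ E = x ⟨E+1, hE⟩ := by
    intro E hE
    rw [hβ, ← pow_mul, hx]
    simp only []
    apply hζmod
    apply (ZMod.natCast_eq_natCast_iff _ _ _).mp
    rw [hEcast (E+1) (by omega)]
    rw [Nat.cast_mul, Nat.cast_sub (by omega : 1 ≤ ℓ)]
    push_cast
    rw [ZMod.natCast_self]
    ring
  have hnode2 : ∀ (E : ℕ) (hE : E < w + 1), β ^ E * ζ = x ⟨E, hE⟩ := by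
    intro E hE
    rw [hβ, ← pow_mul, ← pow_succ, hx]
    simp only []
    apply hζmod
    apply (ZMod.natCast_eq_natCast_iff _ _ _).mp
    rw [hEcast E (by omega)]
    push_cast [Nat.cast_sub (by omega : 1 ≤ ℓ)]
    rw [ZMod.natCast_self]
    ring
  -- the main identity
  have hid : ∀ f : Polynomial F,
      ∑ v : Fin (w+1), C (cv v) * (f + C (ζ ^ (v:ℕ)))^K = f := by
    intro f
    have hstepA : ∀ v : Fin (w+1), (f + C (ζ^((v:ℕ))))^K
        = ∑ t ∈ s.powerset, (∏ j ∈ t, f ^ (p ^ (m j))) *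
            (f * C ((β ^ ((s \ t).card))^((v:ℕ))) + C (((β ^ ((s \ t).card)) * ζ)^((v:ℕ)))) := by
      intro v
      have h1 : (f + C (ζ^((v:ℕ))))^K
          = (f + C (ζ^((v:ℕ)))) * ∏ j ∈ s, (f ^ (p^(m j)) + C (β ^ ((v:ℕ)))) := by
        rw [hK, pow_add, pow_one]
        congr 1
        rw [← Finset.prod_pow_eq_pow_sum]
        apply Finset.prod_congr rfl
        intro j hj
        rw [add_pow_char_pow]
        congr 1
        rw [← map_pow, pow_right_comm, hζm j, hβ]
      rw [h1, Finset.prod_add, Finset.mul_sum]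
      apply Finset.sum_congr rfl
      intro t ht
      have hconst : (∏ _j ∈ s \ t, (C (β ^ ((v:ℕ))) : Polynomial F))
          = C ((β ^ ((s\t).card))^((v:ℕ))) := by
        rw [Finset.prod_const, ← map_pow, pow_right_comm]
      rw [hconst, mul_pow, map_mul]
      ring
    calc ∑ v : Fin (w+1), C (cv v) * (f + C (ζ^((v:ℕ))))^K
        = ∑ v : Fin (w+1), ∑ t ∈ s.powerset, C (cv v) *
            ((∏ j ∈ t, f ^ (p ^ (m j))) * (f * C ((β ^ ((s\t).card))^((v:ℕ)))
              + C (((β ^ ((s\t).card)) * ζ)^((v:ℕ))))) := by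
          apply Finset.sum_congr rfl
          intro v _
          rw [hstepA v, Finset.mul_sum]
      _ = ∑ t ∈ s.powerset, ∑ v : Fin (w+1), C (cv v) *
            ((∏ j ∈ t, f ^ (p ^ (m j))) * (f * C ((β ^ ((s\t).card))^((v:ℕ)))
              + C (((β ^ ((s\t).card)) * ζ)^((v:ℕ))))) := Finset.sum_comm
      _ = ∑ t ∈ s.powerset, (if t = ∅ then f else 0) := by
          apply Finset.sum_congr rfl
          intro t ht
          have hts : t ⊆ s := Finset.mem_powerset.mp ht
          have hEtle : (s \ t).card ≤ w - 1 := by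
            calc (s \ t).card ≤ s.card := Finset.card_le_card (Finset.sdiff_subset)
            _ = w - 1 := hscard
          have hE1 : (s \ t).card + 1 < w + 1 := by omega
          have hE2 : (s \ t).card < w + 1 := by omega
          have hsplit : ∀ v : Fin (w+1), C (cv v) *
              ((∏ j ∈ t, f ^ (p ^ (m j))) * (f * C ((β ^ ((s\t).card))^((v:ℕ)))
                + C (((β ^ ((s\t).card)) * ζ)^((v:ℕ)))))
              = (∏ j ∈ t, f ^ (p ^ (m j))) * f * C (cv v * ((β ^ ((s\t).card))^((v:ℕ))))
                + (∏ j ∈ t, f ^ (p ^ (m j))) * C (cv v * (((β ^ ((s\t).card)) * ζ)^((v:ℕ)))) := by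
            intro v
            rw [map_mul, map_mul]
            ring
          rw [Finset.sum_congr rfl (fun v _ => hsplit v), Finset.sum_add_distrib,
            ← Finset.mul_sum, ← Finset.mul_sum, ← map_sum, ← map_sum]
          rw [show (β ^ ((s\t).card)) = x ⟨(s\t).card + 1, hE1⟩ from hnode1 _ hE1]
          rw [show (x ⟨(s\t).card + 1, hE1⟩ * ζ) = x ⟨(s\t).card, hE2⟩ from by
            rw [← hnode1 _ hE1]; exact hnode2 _ hE2]
          rw [hMom ⟨(s\t).card + 1, hE1⟩, hMom ⟨(s\t).card, hE2⟩]
          have hδval : ∀ (a : ℕ) (h : a < w + 1), δv ⟨a, h⟩ = if a = w then 1 else 0 := by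
            intro a h
            rfl
          have hδ2 : δv ⟨(s\t).card, hE2⟩ = 0 := by
            rw [hδval, if_neg]
            omega
          by_cases hte : t = ∅
          · subst hte
            have hcard0 : (s \ (∅ : Finset (Fin w))).card = w - 1 := by
              rw [Finset.sdiff_empty, hscard]
            have hδ1 : δv ⟨(s \ (∅ : Finset (Fin w))).card + 1, hE1⟩ = 1 := by
              rw [hδval, if_pos]
              omega
            rw [hδ1, hδ2, if_pos rfl]
            simp
          · have ht1 : 1 ≤ t.card := by
              rcases Nat.eq_zero_or_pos t.card with h | h
              · exact absurd (Finset.card_eq_zero.mp h) hte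
              · exact h
            have hcardlt : (s \ t).card + 1 ≠ w := by
              have h9 : (s \ t).card = s.card - t.card := Finset.card_sdiff_of_subset hts
              have h10 : t.card ≤ s.card := Finset.card_le_card hts
              rw [h9, hscard]
              rw [hscard] at h10
              omega
            have hδ1 : δv ⟨(s \ t).card + 1, hE1⟩ = 0 := by
              rw [hδval, if_neg hcardlt]
            rw [hδ1, hδ2, if_neg hte]
            simp
      _ = f := by
          rw [Finset.sum_eq_single_of_mem ∅ (Finset.empty_mem_powerset s)
            (fun b _ hb => by rw [if_neg hb])]
          rw [if_pos rfl]
  -- package: k-th roots of the weights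
  intro f
  have hex : ∀ v : Fin (w+1), ∃ d : F, d ^ k = cv v :=
    fun v => IsAlgClosed.exists_pow_nat_eq (cv v) (Nat.pos_of_ne_zero hk0)
  choose dv hdv using hex
  refine ⟨fun v => C (dv v) * (f + C (ζ ^ ((v:ℕ))))^(K / k), ?_⟩
  have hterm : ∀ v : Fin (w+1), (C (dv v) * (f + C (ζ ^ ((v:ℕ))))^(K / k))^k
      = C (cv v) * (f + C (ζ ^ ((v:ℕ))))^K := by
    intro v
    rw [mul_pow, ← map_pow, hdv, ← pow_mul, Nat.div_mul_cancel hkK]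
  rw [Finset.sum_congr rfl (fun v _ => hterm v)]
  exact (hid f).symm
theorem waring_odd_order (F : Type*) [Field F] [IsAlgClosed F]
    (p k c : ℕ) [Fact p.Prime] [CharP F p] (hodd : Odd p)
    (hcop : Nat.Coprime k p)
    (horder : Odd (orderOf ((p : ZMod k))))
    (hc : c = sInf {c' : ℕ | (Nat.digits p k).sum ≤ 2 ^ c' + 1}) :
    waring F k ≤ ((2 ^ (c + 1) + (if (Nat.digits p k).sum = 2 ^ c + 1 then 1 else 0) : ℕ) : ℕ∞)
      ∧ 2 ^ (c + 1) + (if (Nat.digits p k).sum = 2 ^ c + 1 then 1 else 0)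
          < 4 * (Nat.digits p k).sum := by
  have hp : p.Prime := Fact.out
  have hp2 : 2 ≤ p := hp.two_le
  have hk0 : k ≠ 0 := by
    intro h
    subst h
    have : Nat.gcd 0 p = 1 := hcop
    simp at this
    omega
  have hpk : ¬ p ∣ k := by
    intro h
    have h2 : p ∣ Nat.gcd k p := Nat.dvd_gcd h dvd_rfl
    rw [hcop] at h2
    have := Nat.le_of_dvd one_pos h2
    omega
  set γ := (Nat.digits p k).sum with hγ
  have hγ1 : 1 ≤ γ := by
    have hd := Nat.digits_def' (by omega : 1 < p) (Nat.pos_of_ne_zero hk0)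
    have hmod : k % p ≠ 0 := fun h => hpk (Nat.dvd_of_mod_eq_zero h)
    rw [hγ, hd]
    simp only [List.sum_cons]
    omega
  have hγc : γ ≤ 2 ^ c + 1 := by
    have hne : {c' : ℕ | γ ≤ 2 ^ c' + 1}.Nonempty :=
      ⟨γ, by have := Nat.lt_two_pow_self (n := γ); simp only [Set.mem_setOf_eq]; omega⟩
    have := Nat.sInf_mem hne
    rw [← hc] at this
    exact this
  have h2c : 1 ≤ 2 ^ c := Nat.one_le_two_pow
  have h2c1 : 2 ^ (c+1) = 2 * 2 ^ c := by rw [pow_succ]; ring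
  -- padding
  have hpad : ∀ (n n' : ℕ), n ≤ n' → ∀ g : Polynomial F,
      (∃ y : Fin n → Polynomial F, g = ∑ i, y i ^ k) →
      (∃ y : Fin n' → Polynomial F, g = ∑ i, y i ^ k) := by
    intro n n' hnn'
    induction n', hnn' using Nat.le_induction with
    | base => exact fun g h => h
    | succ n' hle ih =>
      intro g hg
      obtain ⟨y, hy⟩ := ih g hg
      set y' : Fin (n' + 1) → Polynomial F := Fin.snoc y 0 with hy'
      refine ⟨y', ?_⟩
      rw [Fin.sum_univ_castSucc]
      have h1 : ∀ i : Fin n', y' i.castSucc = y i := by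
        intro i
        rw [hy']
        simp
      have h2 : y' (Fin.last n') = 0 := by
        rw [hy']
        simp
      rw [h2, Finset.sum_congr rfl (fun i _ => by rw [h1 i]), zero_pow hk0, add_zero]
      exact hy
  constructor
  · apply sInf_le
    refine ⟨2 ^ (c + 1) + (if γ = 2 ^ c + 1 then 1 else 0), rfl, ?_⟩
    intro f
    have hcore := waring_core F p k hodd hcop horder f
    apply hpad (γ + 1) _ _ f hcore
    by_cases hind : γ = 2 ^ c + 1
    · rw [if_pos hind]
      omega
    · rw [if_neg hind]
      omega
  · by_cases hc0 : c = 0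
    · subst hc0
      by_cases hind : γ = 2 ^ 0 + 1
      · rw [if_pos hind]
        omega
      · rw [if_neg hind]
        omega
    · have hnotmem : ¬ (γ ≤ 2 ^ (c-1) + 1) := by
        have hlt : c - 1 < sInf {c' : ℕ | γ ≤ 2 ^ c' + 1} := by
          rw [← hc]
          omega
        have := Nat.notMem_of_lt_sInf hlt
        simpa using this
      have hge : 2 ^ (c-1) + 2 ≤ γ := by omega
      have hpow : 2 ^ (c+1) = 4 * 2 ^ (c-1) := by
        have : c + 1 = (c-1) + 2 := by omega
        rw [this, pow_add]
        ring
      by_cases hind : γ = 2 ^ c + 1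
      · rw [if_pos hind]
        omega
      · rw [if_neg hind]
        omega
end

section
/- Let p be prime and k ∈ ℕ coprime to p with γ_p(k) > p, let r be the order of p mod k, and let ℓ be the least prime not dividing r. Then v(p,k) < 2·γ_p(k)^ℓ − 1. -/
open Polynomial Finset in
private lemma waux_pow_pow_fix {R : Type*} [Monoid R] (c : R) (q : ℕ) (h : c ^ q = c) :
    ∀ t : ℕ, c ^ (q ^ t) = c := by
  intro t
  induction t with
  | zero => simp
  | succ n ih => rw [pow_succ, pow_mul, ih, h]

open Polynomial Finset in
private lemma waux_list_sum_getD (l : List ℕ) :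
    l.sum = ∑ i ∈ Finset.range l.length, l.getD i 0 := by
  induction l with
  | nil => simp
  | cons a t ih =>
    rw [List.sum_cons, List.length_cons, Finset.sum_range_succ', ih]
    simp only [List.getD_cons_succ, List.getD_cons_zero]
    ring

open Polynomial Finset in
private lemma waux_ofDigits (p : ℕ) (l : List ℕ) :
    Nat.ofDigits p l = ∑ i ∈ Finset.range l.length, l.getD i 0 * p ^ i := by
  induction l with
  | nil => simp
  | cons a t ih =>
    rw [Nat.ofDigits_cons, List.length_cons, Finset.sum_range_succ', ih]
    simp only [List.getD_cons_succ, List.getD_cons_zero, pow_zero, mul_one, pow_succ]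
    rw [Finset.mul_sum]
    have : ∀ i ∈ Finset.range t.length, p * (t.getD i 0 * p ^ i) = t.getD i 0 * (p ^ i * p) :=
      fun i _ => by ring
    rw [Finset.sum_congr rfl this]
    ring

open Polynomial Finset in
private lemma waux_char_sum {F : Type*} [Field F] {n : ℕ} {ζ : F} (hζ : IsPrimitiveRoot ζ n)
    (e : ℕ) :
    ∑ i ∈ Finset.range n, (ζ ^ i) ^ e = if n ∣ e then ((n : ℕ) : F) else 0 := by
  have hrw : ∀ i : ℕ, (ζ ^ i) ^ e = (ζ ^ e) ^ i := fun i => by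
    rw [← pow_mul, mul_comm, pow_mul]
  simp only [hrw]
  by_cases h : n ∣ e
  · rw [if_pos h, (hζ.pow_eq_one_iff_dvd e).mpr h]
    simp
  · rw [if_neg h]
    have h1 : ζ ^ e ≠ 1 := fun hh => h ((hζ.pow_eq_one_iff_dvd e).mp hh)
    rw [geom_sum_eq h1 n, ← pow_mul, mul_comm, pow_mul, hζ.pow_eq_one, one_pow, sub_self,
      zero_div]

open Polynomial Finset in
private lemma waux_piece {R : Type*} [CommSemiring R] (k m : ℕ) (w : ℕ → R)
    (h : ∀ i, i < m → ∃ y, w i = y ^ k) :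
    ∃ g : Fin m → R, ∑ i ∈ Finset.range m, w i = ∑ t, g t ^ k := by
  choose y hy using h
  refine ⟨fun t => y t.val t.isLt, ?_⟩
  rw [← Fin.sum_univ_eq_sum_range w m]
  exact Finset.sum_congr rfl fun t _ => hy t.val t.isLt

open Polynomial Finset in
private lemma waux_glue {R : Type*} [CommSemiring R] (k m₁ m₂ : ℕ) (S₁ S₂ : R)
    (h₁ : ∃ g : Fin m₁ → R, S₁ = ∑ t, g t ^ k) (h₂ : ∃ g : Fin m₂ → R, S₂ = ∑ t, g t ^ k) :
    ∃ g : Fin (m₁ + m₂) → R, S₁ + S₂ = ∑ t, g t ^ k := by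
  obtain ⟨g₁, hg₁⟩ := h₁
  obtain ⟨g₂, hg₂⟩ := h₂
  refine ⟨Fin.addCases g₁ g₂, ?_⟩
  rw [Fin.sum_univ_add]
  simp only [Fin.addCases_left, Fin.addCases_right]
  rw [hg₁, hg₂]

open Polynomial Finset in
private lemma waux_core {F : Type*} [Field F] [IsAlgClosed F] (p : ℕ) [Fact p.Prime] [CharP F p]
    (k q u L : ℕ) (d B : ℕ → ℕ) (lam Lam : F)
    (hq : q = p ^ u) (hu : u ≠ 0) (hL : 0 < L) (hk0 : k ≠ 0)
    (hB0 : B 0 = 1) (hBu : ∀ j, ∃ t, B j = q ^ t)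
    (hγq : (∑ j ∈ Finset.range L, d j) ≤ q) (hγ3 : 3 ≤ ∑ j ∈ Finset.range L, d j)
    (hd0 : ¬ p ∣ d 0)
    (hLam : Lam = lam ^ q) (hlamB : ∀ j, j ≠ 0 → lam ^ B j = Lam) (hLamne : Lam ≠ lam)
    (hkN : k ∣ ∑ j ∈ Finset.range L, d j * B j) :
    ∃ g : Fin ((q - 1) + ((q - 1) + 1)) → Polynomial F, (X : Polynomial F) = ∑ t, g t ^ k := by
  classical
  have hp := (inferInstance : Fact p.Prime).out
  set γ := ∑ j ∈ Finset.range L, d j with hγdef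
  set N := ∑ j ∈ Finset.range L, d j * B j with hNdef
  set W := γ * (q - 2) + 1 with hWdef
  clear_value γ N W
  have hq3 : 3 ≤ q := le_trans hγ3 hγq
  have hq0 : q ≠ 0 := by omega
  -- char facts
  have hpF : (p : F) = 0 := CharP.cast_eq_zero F p
  have hqF : ((q : ℕ) : F) = 0 := by
    rw [hq]; push_cast; rw [hpF]; exact zero_pow hu
  have hq1F : ((q - 1 : ℕ) : F) = -1 := by
    have h1 : ((q - 1 : ℕ) : F) = ((q : ℕ) : F) - 1 := by
      have : (1:ℕ) ≤ q := by omega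
      push_cast [Nat.cast_sub this]
      ring
    rw [h1, hqF]; ring
  haveI : NeZero ((q - 1 : ℕ) : F) := ⟨by rw [hq1F]; simp⟩
  obtain ⟨ζ, hζ⟩ := HasEnoughRootsOfUnity.exists_primitiveRoot F (q - 1)
  -- fixed elements
  have hcfix : ∀ i : ℕ, (ζ ^ i) ^ q = ζ ^ i := by
    intro i
    have h1 : (ζ ^ i) ^ (q - 1) = 1 := by
      rw [← pow_mul, mul_comm, pow_mul, hζ.pow_eq_one, one_pow]
    have h2 : q = (q - 1) + 1 := by omega
    rw [h2, pow_add, h1, one_mul, pow_one]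
  have hcB : ∀ c : F, c ^ q = c → ∀ j, c ^ B j = c := by
    intro c hc j
    obtain ⟨t, ht⟩ := hBu j
    rw [ht]
    exact waux_pow_pow_fix c q hc t
  -- the elementary pieces
  set A : F → ℕ → Polynomial F := fun θ j => C (θ ^ B j) * X ^ B j with hA
  set P : F → Polynomial (Polynomial F) :=
    fun θ => ∏ j ∈ Finset.range L, (X + C (A θ j)) ^ d j with hPdef
  -- the key pointwise identity
  have hID : ∀ (θ c : F), c ^ q = c →
      (C θ * X + C c : Polynomial F) ^ N = (P θ).eval (C c) := by
    intro θ c hc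
    rw [hPdef]
    simp only [eval_prod, eval_pow, eval_add, eval_X, eval_C]
    rw [hNdef, ← Finset.prod_pow_eq_pow_sum]
    refine Finset.prod_congr rfl fun j _ => ?_
    rw [mul_comm (d j) (B j), pow_mul]
    congr 1
    obtain ⟨t, ht⟩ := hBu j
    have hBp : B j = p ^ (u * t) := by rw [ht, hq, ← pow_mul]
    rw [hBp, add_pow_char_pow, ← hBp, mul_pow, ← C_pow, ← C_pow, hcB c hc j, hA, add_comm]
  -- degree bound
  have hdeg : ∀ θ : F, (P θ).natDegree < γ + 1 := by
    intro θ
    have h1 : (P θ).natDegree ≤ ∑ j ∈ Finset.range L, ((X + C (A θ j)) ^ d j).natDegree :=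
      Polynomial.natDegree_prod_le _ _
    have h2 : ∀ j ∈ Finset.range L, ((X + C (A θ j)) ^ d j).natDegree ≤ d j := by
      intro j _
      refine le_trans (Polynomial.natDegree_pow_le) ?_
      rw [Polynomial.natDegree_X_add_C, mul_one]
    have := le_trans h1 (Finset.sum_le_sum h2)
    omega
  -- Vieta: subleading coefficient
  set E : F → Polynomial F := fun θ => ∑ j ∈ Finset.range L, (d j : Polynomial F) * A θ j with hE
  have hcoeff1 : ∀ θ : F, (P θ).coeff (γ - 1) = E θ := by
    intro θ
    set M : Multiset (Polynomial F) :=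
      (Finset.range L).val.bind fun j => Multiset.replicate (d j) (A θ j) with hM
    have hcard : Multiset.card M = γ := by
      rw [hM, Multiset.card_bind]
      simp only [Function.comp, Multiset.card_replicate]
      rw [hγdef]
      rfl
    have hPM : P θ = (M.map fun t => X + C t).prod := by
      rw [hPdef, hM, Multiset.map_bind, Multiset.prod_bind]
      simp only [Multiset.map_replicate, Multiset.prod_replicate]
      rfl
    rw [hPM, Multiset.prod_X_add_C_coeff M (by omega : γ - 1 ≤ Multiset.card M)]
    rw [hcard, show γ - (γ - 1) = 1 by omega]
    rw [Multiset.esymm, Multiset.powersetCard_one, Multiset.map_map]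
    simp only [Function.comp, Multiset.prod_singleton]
    rw [Multiset.map_id']
    rw [hM, Multiset.sum_bind]
    simp only [Multiset.sum_replicate]
    rw [hE]
    simp only [nsmul_eq_mul]
    rfl
  -- constant coefficient
  have hcoeff0 : ∀ θ : F, (P θ).coeff 0 = (C θ * X : Polynomial F) ^ N := by
    intro θ
    rw [Polynomial.coeff_zero_eq_eval_zero, ← C_0, ← hID θ 0 (by rw [zero_pow hq0])]
    rw [C_0, add_zero]
  -- the two character sums
  set T : F → Polynomial F :=
    fun θ => ∑ i ∈ Finset.range (q - 1), C ((ζ ^ i) ^ W) * (C θ * X + C (ζ ^ i)) ^ N with hT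
  set δ : F := if (q - 1) ∣ W then (-1 : F) else 0 with hδ
  have hdvd1 : (q - 1) ∣ (W + (γ - 1)) := by
    refine ⟨γ, ?_⟩
    have h2 : q - 1 = (q - 2) + 1 := by omega
    rw [hWdef, h2]
    ring_nf
    omega
  have hnd : ∀ m, m ≤ γ → m ≠ 0 → m ≠ γ - 1 → ¬ (q - 1) ∣ (W + m) := by
    intro m hm h0 hne hdvd
    have hd1 := Nat.dvd_sub hdvd1 hdvd
    have hd2 := Nat.dvd_sub hdvd hdvd1
    rcases Nat.lt_or_ge m (γ - 1) with hlt | hge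
    · have heq : W + (γ - 1) - (W + m) = γ - 1 - m := by omega
      rw [heq] at hd1
      have := Nat.le_of_dvd (by omega) hd1
      omega
    · have hmγ : m = γ := by omega
      have heq : W + m - (W + (γ - 1)) = 1 := by omega
      rw [heq] at hd2
      have := Nat.le_of_dvd (by omega) hd2
      omega
  have hTval : ∀ θ : F, T θ = (C θ * X : Polynomial F) ^ N * C δ - E θ := by
    intro θ
    simp only [hT]
    have step1 : ∀ i ∈ Finset.range (q - 1),
        C ((ζ ^ i) ^ W) * (C θ * X + C (ζ ^ i)) ^ N
          = ∑ m ∈ Finset.range (γ + 1), (P θ).coeff m * C ((ζ ^ i) ^ (W + m)) := by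
      intro i _
      rw [hID θ (ζ ^ i) (hcfix i), Polynomial.eval_eq_sum_range' (hdeg θ) (C (ζ ^ i))]
      rw [Finset.mul_sum]
      refine Finset.sum_congr rfl fun m _ => ?_
      simp only [pow_add, map_mul, map_pow]
      ring
    rw [Finset.sum_congr rfl step1, Finset.sum_comm]
    have step2 : ∀ m ∈ Finset.range (γ + 1),
        (∑ i ∈ Finset.range (q - 1), (P θ).coeff m * C ((ζ ^ i) ^ (W + m)))
          = (P θ).coeff m * C (if (q - 1) ∣ (W + m) then ((q - 1 : ℕ) : F) else 0) := by
      intro m _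
      rw [← Finset.mul_sum, ← map_sum, waux_char_sum hζ (W + m)]
    rw [Finset.sum_congr rfl step2]
    have hsub : ({0, γ - 1} : Finset ℕ) ⊆ Finset.range (γ + 1) := by
      intro x hx
      simp only [Finset.mem_insert, Finset.mem_singleton] at hx
      rcases hx with h | h <;> simp [h] <;> omega
    rw [← Finset.sum_subset hsub ?vanish]
    case vanish =>
      intro m hmr hmn
      simp only [Finset.mem_insert, Finset.mem_singleton, not_or] at hmn
      rw [Finset.mem_range] at hmr
      rw [if_neg (hnd m (by omega) hmn.1 hmn.2), map_zero, mul_zero]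
    rw [Finset.sum_pair (by omega : (0:ℕ) ≠ γ - 1)]
    rw [hcoeff0 θ, hcoeff1 θ, if_pos hdvd1, hq1F, add_zero, ← hδ]
    have hC1 : (C (-1 : F)) = -1 := by simp
    rw [hC1]
    ring
  -- collapsing the E-difference
  have hEdiff : C Lam * E 1 - E lam = C ((d 0 : F) * (Lam - lam)) * X := by
    simp only [hE]
    rw [Finset.mul_sum, ← Finset.sum_sub_distrib]
    rw [Finset.sum_eq_single 0]
    · simp only [hA]
      rw [hB0, one_pow, pow_one, pow_one, map_one, one_mul]
      push_cast
      rw [map_mul, map_sub, map_natCast]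
      ring
    · intro j _ hj
      simp only [hA]
      rw [hlamB j hj, one_pow, map_one, one_mul, hLam]
      ring
    · intro h
      exact absurd (Finset.mem_range.mpr hL) h
  -- the final linear relation
  have hZ : C Lam * (C (1:F) * X : Polynomial F) ^ N - (C lam * X) ^ N
      = C (Lam - lam ^ N) * X ^ N := by
    simp only [map_one, one_mul, mul_pow, ← C_pow, map_sub]
    ring
  have hkey : C ((d 0 : F) * (Lam - lam)) * X
      = T lam - C Lam * T 1 + C δ * (C (Lam - lam ^ N) * X ^ N) := by
    have h1 := hTval 1
    have h2 := hTval lam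
    linear_combination (C Lam) * h1 - h2 - hEdiff + (C δ) * hZ
  have hD0 : (d 0 : F) ≠ 0 := by
    intro h
    exact hd0 ((CharP.cast_eq_zero_iff F p (d 0)).mp h)
  have hDne : (d 0 : F) * (Lam - lam) ≠ 0 := mul_ne_zero hD0 (sub_ne_zero.mpr hLamne)
  set Ei : F := ((d 0 : F) * (Lam - lam))⁻¹ with hEi
  have hCinv : C Ei * C ((d 0 : F) * (Lam - lam)) = (1 : Polynomial F) := by
    rw [← C_mul, inv_mul_cancel₀ hDne, C_1]
  have hxeq : (X : Polynomial F)
      = C Ei * T lam - C Ei * C Lam * T 1 + C Ei * C δ * (C (Lam - lam ^ N) * X ^ N) := by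
    linear_combination (C Ei) * hkey - (X : Polynomial F) * hCinv
  -- k-th power extraction
  have hk1 : 0 < k := Nat.pos_of_ne_zero hk0
  have hkpow : ∀ (s : F) (h : Polynomial F), ∃ y : Polynomial F, C s * h ^ N = y ^ k := by
    intro s h
    obtain ⟨t, ht⟩ := IsAlgClosed.exists_pow_nat_eq s hk1
    refine ⟨C t * h ^ (N / k), ?_⟩
    rw [mul_pow, ← C_pow, ht, ← pow_mul, Nat.div_mul_cancel hkN]
  -- the three groups of terms
  have hpart1 : ∃ g : Fin (q - 1) → Polynomial F,
      C Ei * T lam = ∑ t, g t ^ k := by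
    simp only [hT]
    rw [Finset.mul_sum]
    refine waux_piece k (q - 1) _ fun i _ => ?_
    obtain ⟨y, hy⟩ := hkpow (Ei * (ζ ^ i) ^ W) (C lam * X + C (ζ ^ i))
    exact ⟨y, by rw [← hy, map_mul]; ring⟩
  have hpart2 : ∃ g : Fin (q - 1) → Polynomial F,
      -(C Ei * C Lam * T 1) = ∑ t, g t ^ k := by
    simp only [hT]
    rw [Finset.mul_sum, ← Finset.sum_neg_distrib]
    refine waux_piece k (q - 1) _ fun i _ => ?_
    obtain ⟨y, hy⟩ := hkpow (-(Ei * Lam * (ζ ^ i) ^ W)) (C (1:F) * X + C (ζ ^ i))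
    exact ⟨y, by rw [← hy, map_neg, map_mul, map_mul]; ring⟩
  have hpart3 : ∃ g : Fin 1 → Polynomial F,
      C Ei * C δ * (C (Lam - lam ^ N) * X ^ N) = ∑ t, g t ^ k := by
    obtain ⟨y, hy⟩ := hkpow (Ei * δ * (Lam - lam ^ N)) X
    refine ⟨fun _ => y, ?_⟩
    rw [Fin.sum_univ_one, ← hy, map_mul, map_mul]
    ring
  obtain ⟨g, hg⟩ := waux_glue k (q - 1) ((q - 1) + 1) _ _ hpart1
    (waux_glue k (q - 1) 1 _ _ hpart2 hpart3)
  refine ⟨g, ?_⟩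
  rw [← hg]
  linear_combination hxeq

open Polynomial Finset in
theorem waring_least_prime_bound (F : Type*) [Field F] [IsAlgClosed F]
    (p k l : ℕ) [Fact p.Prime] [CharP F p]
    (hcop : Nat.Coprime k p)
    (hγ : p < (Nat.digits p k).sum)
    (hl : l.Prime) (hlr : ¬ l ∣ orderOf ((p : ZMod k)))
    (hleast : ∀ l' < l, l'.Prime → l' ∣ orderOf ((p : ZMod k))) :
    waring F k < ((2 * (Nat.digits p k).sum ^ l - 1 : ℕ) : ℕ∞) := by
  classical
  have hp := (inferInstance : Fact p.Prime).out
  have hp2 : 2 ≤ p := hp.two_le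
  have hp1 : 1 < p := hp2
  have hk0 : k ≠ 0 := by
    rintro rfl
    simp only [Nat.digits_zero, List.sum_nil] at hγ
    omega
  haveI : NeZero k := ⟨hk0⟩
  set γ := (Nat.digits p k).sum with hγdef
  set r := orderOf ((p : ZMod k)) with hrdef
  set pu : (ZMod k)ˣ := ZMod.unitOfCoprime p hcop.symm with hpudef
  have hpu : ((pu : (ZMod k)ˣ) : ZMod k) = (p : ZMod k) := ZMod.coe_unitOfCoprime p hcop.symm
  have hru : orderOf pu = r := by rw [hrdef, ← hpu, orderOf_units]
  have hr1 : 0 < r := hru ▸ orderOf_pos pu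
  haveI : NeZero r := ⟨by omega⟩
  have hγ3 : 3 ≤ γ := by omega
  have hl2 : 2 ≤ l := hl.two_le
  -- choice of the exponent u
  set Q : ℕ → Prop := fun m => p ^ l ^ m < γ with hQ
  have hQ0 : Q 0 := by rw [hQ]; simpa using hγ
  have hQtop : ¬ Q γ := by
    rw [hQ]
    simp only [not_lt]
    calc γ ≤ 2 ^ γ := (Nat.lt_two_pow_self (n := γ)).le
    _ ≤ 2 ^ l ^ γ := Nat.pow_le_pow_right (by omega) (Nat.lt_pow_self (n := γ) hl2).le
    _ ≤ p ^ l ^ γ := Nat.pow_le_pow_left hp2 _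
  set c := Nat.findGreatest Q γ with hc
  have hcspec : Q c := Nat.findGreatest_spec (Nat.zero_le γ) hQ0
  have hcle : c ≤ γ := Nat.findGreatest_le γ
  have hcne : c ≠ γ := fun h => hQtop (h ▸ hcspec)
  have hcnext : ¬ Q (c + 1) := Nat.findGreatest_is_greatest (n := γ) (by omega) (by omega)
  set u := l ^ (c + 1) with hu
  set q := p ^ u with hq
  have hu0 : u ≠ 0 := pow_ne_zero _ (by omega)
  have hγq : γ ≤ q := by
    have := hcnext
    rw [hQ] at this
    simp only [not_lt] at this
    rw [hq, hu]
    exact this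
  have hcs : p ^ l ^ c < γ := by rw [hQ] at hcspec; exact hcspec
  have hqle : q ≤ (γ - 1) ^ l := by
    have h1 : p ^ l ^ c ≤ γ - 1 := by omega
    calc q = (p ^ l ^ c) ^ l := by rw [hq, hu, ← pow_mul, ← pow_succ]
    _ ≤ (γ - 1) ^ l := Nat.pow_le_pow_left h1 l
  -- digits
  set L := (Nat.digits p k).length with hL
  set d : ℕ → ℕ := fun j => (Nat.digits p k).getD j 0 with hd
  have hL0 : 0 < L := by
    rw [hL]
    exact List.length_pos_iff.mpr (Nat.digits_ne_nil_iff_ne_zero.mpr hk0)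
  have hγsum : γ = ∑ j ∈ Finset.range L, d j := waux_list_sum_getD _
  have hksum : k = ∑ j ∈ Finset.range L, d j * p ^ j := by
    conv_lhs => rw [← Nat.ofDigits_digits p k]
    exact waux_ofDigits p _
  have hpk : ¬ p ∣ k := (hp.coprime_iff_not_dvd).mp hcop.symm
  have hd0 : ¬ p ∣ d 0 := by
    have hdig : Nat.digits p k = k % p :: Nat.digits p (k / p) :=
      Nat.digits_def' hp1 (Nat.pos_of_ne_zero hk0)
    rw [hd]
    simp only [hdig, List.getD_cons_zero]
    intro hdvd
    exact hpk ((Nat.dvd_mod_iff (dvd_refl p)).mp hdvd)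
  -- CRT data
  have hco : Nat.Coprime (u * l) r := by
    have h1 : Nat.Coprime l r := (Nat.Prime.coprime_iff_not_dvd hl).mpr hlr
    have h2 : u * l = l ^ (c + 2) := by rw [hu, ← pow_succ]
    rw [h2]
    exact Nat.Coprime.pow_left _ h1
  set av : ZMod r := (((ZMod.unitOfCoprime (u * l) hco)⁻¹ : (ZMod r)ˣ) : ZMod r) with hav
  have havmul : ((u * l : ℕ) : ZMod r) * av = 1 := by
    rw [hav, ← ZMod.coe_unitOfCoprime (u * l) hco, ← Units.val_mul, mul_inv_cancel,
      Units.val_one]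
  push_cast at havmul
  set z : ℕ → ℕ := fun j => (av * ((j : ZMod r) - ((u : ℕ) : ZMod r))).val with hz
  set e : ℕ → ℕ := fun j => if j = 0 then 0 else 1 + l * z j with he
  have hmod : ∀ j, (p : ZMod k) ^ (u * e j) = (p : ZMod k) ^ j := by
    intro j
    by_cases h0 : j = 0
    · rw [h0, he]
      simp
    · have hcong : (u * e j) ≡ j [MOD r] := by
        rw [← ZMod.natCast_eq_natCast_iff]
        rw [he]
        simp only [if_neg h0]
        push_cast
        have hzv : ((z j : ℕ) : ZMod r) = av * ((j : ZMod r) - ((u : ℕ) : ZMod r)) := by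
          rw [hz]
          exact ZMod.natCast_zmod_val _
        rw [hzv]
        linear_combination ((j : ZMod r) - ((u : ℕ) : ZMod r)) * havmul
      have hcu : pu ^ (u * e j) = pu ^ j := by
        rw [pow_eq_pow_iff_modEq, hru]
        exact hcong
      calc (p : ZMod k) ^ (u * e j)
          = ((pu ^ (u * e j) : (ZMod k)ˣ) : ZMod k) := by
            rw [Units.val_pow_eq_pow_val, hpu]
      _ = ((pu ^ j : (ZMod k)ˣ) : ZMod k) := by rw [hcu]
      _ = (p : ZMod k) ^ j := by rw [Units.val_pow_eq_pow_val, hpu]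
  set B : ℕ → ℕ := fun j => q ^ e j with hB
  have hkN : k ∣ ∑ j ∈ Finset.range L, d j * B j := by
    have hcast : ((∑ j ∈ Finset.range L, d j * B j : ℕ) : ZMod k) = 0 := by
      calc ((∑ j ∈ Finset.range L, d j * B j : ℕ) : ZMod k)
          = ∑ j ∈ Finset.range L, (d j : ZMod k) * ((p : ZMod k)) ^ (u * e j) := by
            push_cast [hB, hq]
            refine Finset.sum_congr rfl fun j _ => ?_
            rw [← pow_mul]
      _ = ∑ j ∈ Finset.range L, (d j : ZMod k) * ((p : ZMod k)) ^ j :=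
            Finset.sum_congr rfl fun j _ => by rw [hmod j]
      _ = ((∑ j ∈ Finset.range L, d j * p ^ j : ℕ) : ZMod k) := by push_cast; rfl
      _ = ((k : ℕ) : ZMod k) := by rw [← hksum]
      _ = 0 := ZMod.natCast_self k
    exact (ZMod.natCast_eq_zero_iff _ _).mp hcast
  -- the root of unity lam
  have hq2 : 2 ≤ q := by omega
  have hql2 : q < q ^ l := by
    calc q = q ^ 1 := (pow_one q).symm
    _ < q ^ l := Nat.pow_lt_pow_right (by omega) (by omega)
  have hql1 : ((q ^ l - 1 : ℕ) : F) ≠ 0 := by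
    have h1 : (1:ℕ) ≤ q ^ l := by omega
    have hcast : ((q ^ l - 1 : ℕ) : F) = ((q : ℕ) : F) ^ l - 1 := by
      push_cast [Nat.cast_sub h1]
      ring
    have hqF : ((q : ℕ) : F) = 0 := by
      rw [hq]
      push_cast [CharP.cast_eq_zero F p]
      exact zero_pow hu0
    rw [hcast, hqF, zero_pow (by omega : l ≠ 0)]
    simp
  haveI : NeZero ((q ^ l - 1 : ℕ) : F) := ⟨hql1⟩
  obtain ⟨lam, hlam⟩ := HasEnoughRootsOfUnity.exists_primitiveRoot F (q ^ l - 1)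
  have hlamfix : lam ^ (q ^ l) = lam := by
    have h2 : q ^ l = (q ^ l - 1) + 1 := by omega
    rw [h2, pow_add, hlam.pow_eq_one, one_mul, pow_one]
  set Lam := lam ^ q with hLam
  have hLamne : Lam ≠ lam := by
    intro hcontra
    have hne : lam ≠ 0 := hlam.ne_zero (by omega)
    have h1 : lam ^ (q - 1) * lam = 1 * lam := by
      rw [one_mul, ← pow_succ, show q - 1 + 1 = q by omega, ← hLam, hcontra]
    have h2 : lam ^ (q - 1) = 1 := mul_right_cancel₀ hne h1
    have h3 := (hlam.pow_eq_one_iff_dvd (q - 1)).mp h2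
    have h4 := Nat.le_of_dvd (by omega) h3
    omega
  have hlamB : ∀ j, j ≠ 0 → lam ^ B j = Lam := by
    intro j hj
    rw [hB]
    simp only [he, if_neg hj]
    have h1 : q ^ (1 + l * z j) = (q ^ l) ^ (z j) * q := by
      rw [pow_add, pow_one, pow_mul, mul_comm]
    rw [h1, pow_mul, waux_pow_pow_fix lam (q ^ l) hlamfix (z j), hLam]
  -- apply the core construction
  obtain ⟨g, hg⟩ := waux_core p k q u L d B lam Lam hq hu0 hL0 hk0
    (by rw [hB]; simp [he])
    (fun j => ⟨e j, by rw [hB]⟩)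
    (by rw [← hγsum]; exact hγq) (by rw [← hγsum]; exact hγ3) hd0 hLam hlamB hLamne hkN
  have hall : ∀ f : Polynomial F,
      ∃ y : Fin ((q - 1) + ((q - 1) + 1)) → Polynomial F, f = ∑ i, y i ^ k := by
    intro f
    refine ⟨fun t => (g t).comp f, ?_⟩
    calc f = (X : Polynomial F).comp f := (Polynomial.X_comp).symm
    _ = (∑ t, g t ^ k).comp f := by rw [← hg]
    _ = ∑ t, ((g t).comp f) ^ k := by
        rw [Polynomial.sum_comp]
        exact Finset.sum_congr rfl fun t _ => Polynomial.pow_comp _ _ _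
  have hle : waring F k ≤ (((q - 1) + ((q - 1) + 1) : ℕ) : ℕ∞) :=
    sInf_le ⟨(q - 1) + ((q - 1) + 1), rfl, hall⟩
  refine lt_of_le_of_lt hle ?_
  have harith : (q - 1) + ((q - 1) + 1) < 2 * γ ^ l - 1 := by
    have h2 : (γ - 1) ^ l < γ ^ l := Nat.pow_lt_pow_left (by omega) (by omega)
    omega
  exact_mod_cast harith
end
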